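/- arXiv:1403.5699 — 3 statements merged into one kernel-verified Lean document; each statement's English description precedes it below -/
import Mathlib

section
/- Let T > 0 and let (η, u) be a classical solution, with η, u ∈ C¹([0,1]×[0,T]), of the symmetric shallow water system (SSW). Then for every t ∈ [0,T], ∫₀¹ (η(x,t)² + u(x,t)²) dx = ∫₀¹ (η₀(x)² + u₀(x)²) dx. -/
/-!
Multiplying the first equation of (SSW) by `2η` and the second by `2u` gives the local
conservation law `∂ₜ(η² + u²) + ∂ₓ(2ηu + η²u + u³) = 0`. The flux vanishes at `x = 0` and
`x = 1` because `u` does, so integrating the law over `[0, 1] × [0, t]` (Fubini, and the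
fundamental theorem of calculus in each variable) shows that `∫₀¹ (η² + u²) dx` does not depend
on `t`.
-/

open Set MeasureTheory Function

section PartialDerivatives

variable {E : Type*} [NormedAddCommGroup E] [NormedSpace ℝ E] {f : ℝ → ℝ → E} {s t : Set ℝ}
  {x y : ℝ}

theorem HasFDerivWithinAt.uncurry_left {f' : ℝ × ℝ →L[ℝ] E}
    (hf : HasFDerivWithinAt (uncurry f) f' (s ×ˢ t) (x, y)) (hx : x ∈ s) :
    HasDerivWithinAt (f x) (f' (0, 1)) t y :=
  hf.comp_hasDerivWithinAt y ((hasDerivAt_const y x).prodMk (hasDerivAt_id y)).hasDerivWithinAt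
    fun _ hy' => mk_mem_prod hx hy'

theorem HasFDerivWithinAt.uncurry_right {f' : ℝ × ℝ →L[ℝ] E}
    (hf : HasFDerivWithinAt (uncurry f) f' (s ×ˢ t) (x, y)) (hy : y ∈ t) :
    HasDerivWithinAt (f · y) (f' (1, 0)) s x :=
  hf.comp_hasDerivWithinAt (f := (·, y)) x
    ((hasDerivAt_id x).prodMk (hasDerivAt_const x y)).hasDerivWithinAt
    fun _ hx' => mk_mem_prod hx' hy

theorem DifferentiableOn.uncurry_left (hf : DifferentiableOn ℝ (uncurry f) (s ×ˢ t))
    (hx : x ∈ s) : DifferentiableOn ℝ (f x) t := fun y hy =>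
  ((hf (x, y) ⟨hx, hy⟩).hasFDerivWithinAt.uncurry_left hx).differentiableWithinAt

theorem DifferentiableOn.uncurry_right (hf : DifferentiableOn ℝ (uncurry f) (s ×ˢ t))
    (hy : y ∈ t) : DifferentiableOn ℝ (f · y) s := fun x hx =>
  ((hf (x, y) ⟨hx, hy⟩).hasFDerivWithinAt.uncurry_right hy).differentiableWithinAt

theorem ContDiffOn.continuousOn_derivWithin_uncurry_left
    (hf : ContDiffOn ℝ 1 (uncurry f) (s ×ˢ t)) (hs : UniqueDiffOn ℝ s) (ht : UniqueDiffOn ℝ t) :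
    ContinuousOn (uncurry fun x => derivWithin (f x) t) (s ×ˢ t) :=
  ((hf.continuousOn_fderivWithin (hs.prod ht) le_rfl).clm_apply continuousOn_const).congr
    fun p hp => ((hf.differentiableOn one_ne_zero p hp).hasFDerivWithinAt.uncurry_left
      hp.1).derivWithin (ht _ hp.2)

end PartialDerivatives

theorem intervalIntegral.integral_eq_sub_of_hasDerivWithinAt_Icc {E : Type*}
    [NormedAddCommGroup E] [NormedSpace ℝ E] [CompleteSpace E] {g g' : ℝ → E} {a b : ℝ}
    (hab : a ≤ b) (hderiv : ∀ x ∈ Icc a b, HasDerivWithinAt g (g' x) (Icc a b) x)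
    (hint : IntervalIntegrable g' volume a b) : ∫ x in a..b, g' x = g b - g a :=
  integral_eq_sub_of_hasDerivAt_of_le hab (HasDerivWithinAt.continuousOn hderiv)
    (fun x hx => (hderiv x (Ioo_subset_Icc_self hx)).hasDerivAt (Icc_mem_nhds hx.1 hx.2)) hint

section ConservationLaw

variable {F G f : ℝ → ℝ → ℝ} {a b c d t : ℝ}

theorem integral_sub_integral_eq_integral_integral_of_hasDerivWithinAt (hab : a ≤ b)
    (hF : ContinuousOn (uncurry F) (Icc a b ×ˢ Icc c d))
    (hf : ContinuousOn (uncurry f) (Icc a b ×ˢ Icc c d))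
    (hFt : ∀ x ∈ Icc a b, ∀ s ∈ Icc c d, HasDerivWithinAt (F x) (f x s) (Icc c d) s)
    (ht : t ∈ Icc c d) :
    (∫ x in a..b, F x t) - ∫ x in a..b, F x c = ∫ s in c..t, ∫ x in a..b, f x s := by
  have hc : c ∈ Icc c d := ⟨le_rfl, ht.1.trans ht.2⟩
  have hsub : Icc c t ⊆ Icc c d := Icc_subset_Icc_right ht.2
  have hint : ∀ s ∈ Icc c d, IntervalIntegrable (F · s) volume a b := fun s hs =>
    (hF.uncurry_right s hs).intervalIntegrable_of_Icc hab
  rw [← intervalIntegral.integral_sub (hint t ht) (hint c hc),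
    ← intervalIntegral_intervalIntegral_swap]
  · refine intervalIntegral.integral_congr fun x hx => ?_
    rw [uIcc_of_le hab] at hx
    exact (intervalIntegral.integral_eq_sub_of_hasDerivWithinAt_Icc ht.1
      (fun s hs => (hFt x hx s (hsub hs)).mono hsub)
      (((hf.uncurry_left x hx).mono hsub).intervalIntegrable_of_Icc ht.1)).symm
  · rw [uIoc_of_le hab, uIoc_of_le ht.1]
    exact ((hf.mono (prod_mono_right hsub)).integrableOn_compact
      (isCompact_Icc.prod isCompact_Icc)).mono_set
      (prod_mono Ioc_subset_Icc_self Ioc_subset_Icc_self)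

theorem integral_eq_of_hasDerivWithinAt_flux (hab : a ≤ b)
    (hF : ContinuousOn (uncurry F) (Icc a b ×ˢ Icc c d))
    (hf : ContinuousOn (uncurry f) (Icc a b ×ˢ Icc c d))
    (hFt : ∀ x ∈ Icc a b, ∀ s ∈ Icc c d, HasDerivWithinAt (F x) (f x s) (Icc c d) s)
    (hGx : ∀ x ∈ Icc a b, ∀ s ∈ Icc c d, HasDerivWithinAt (G · s) (-f x s) (Icc a b) x)
    (hG : ∀ s ∈ Icc c d, G a s = G b s) (ht : t ∈ Icc c d) :
    ∫ x in a..b, F x t = ∫ x in a..b, F x c := by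
  have hflux : ∀ s ∈ Icc c d, ∫ x in a..b, f x s = 0 := fun s hs => by
    have := intervalIntegral.integral_eq_sub_of_hasDerivWithinAt_Icc hab (hGx · · s hs)
      ((hf.uncurry_right s hs).neg.intervalIntegrable_of_Icc hab)
    rwa [intervalIntegral.integral_neg, hG s hs, sub_self, neg_eq_zero] at this
  rw [← sub_eq_zero,
    integral_sub_integral_eq_integral_integral_of_hasDerivWithinAt hab hF hf hFt ht]
  refine (intervalIntegral.integral_congr fun s hs => ?_).trans intervalIntegral.integral_zero
  rw [uIcc_of_le ht.1] at hs
  exact hflux s (Icc_subset_Icc_right ht.2 hs)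

end ConservationLaw

theorem hasDerivWithinAt_ssw_energyFlux {η u : ℝ → ℝ} {I : Set ℝ} {x ηt ut : ℝ}
    (hI : UniqueDiffWithinAt ℝ I x) (hη : DifferentiableWithinAt ℝ η I x)
    (hu : DifferentiableWithinAt ℝ u I x)
    (h1 : ηt + derivWithin u I x + (1/2) * derivWithin (fun z => η z * u z) I x = 0)
    (h2 : ut + derivWithin η I x + (3/2) * (u x * derivWithin u I x)
      + (1/2) * (η x * derivWithin η I x) = 0) :
    HasDerivWithinAt (fun z => 2 * (η z * u z) + η z ^ 2 * u z + u z ^ 3)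
      (-(2 * η x * ηt + 2 * u x * ut)) I x := by
  have hη' := hη.hasDerivWithinAt
  have hu' := hu.hasDerivWithinAt
  rw [(hη'.fun_mul hu').derivWithin hI] at h1
  refine ((((hη'.fun_mul hu').const_mul 2).fun_add ((hη'.fun_pow 2).fun_mul hu')).fun_add
    (hu'.fun_pow 3)).congr_deriv ?_
  linear_combination 2 * η x * h1 + 2 * u x * h2

/-- **L² conservation for the symmetric shallow water system.**
If `(η,u)` is a classical `C¹` solution of (SSW) on `[0,1]×[0,T]`, then the quantity
`∫₀¹ (η² + u²) dx` is conserved. -/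
theorem stmt_0 (T : ℝ) (hT : 0 < T) (η u : ℝ → ℝ → ℝ) (η₀ u₀ : ℝ → ℝ)
    (hηreg : ContDiffOn ℝ 1 (fun p : ℝ × ℝ => η p.1 p.2) ((Icc (0:ℝ) 1) ×ˢ (Icc (0:ℝ) T)))
    (hureg : ContDiffOn ℝ 1 (fun p : ℝ × ℝ => u p.1 p.2) ((Icc (0:ℝ) 1) ×ˢ (Icc (0:ℝ) T)))
    (hpde1 : ∀ y ∈ Icc (0:ℝ) 1, ∀ t ∈ Icc (0:ℝ) T,
      derivWithin (fun s => η y s) (Icc (0:ℝ) T) t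
        + derivWithin (fun z => u z t) (Icc (0:ℝ) 1) y
        + (1/2) * derivWithin (fun z => η z t * u z t) (Icc (0:ℝ) 1) y = 0)
    (hpde2 : ∀ y ∈ Icc (0:ℝ) 1, ∀ t ∈ Icc (0:ℝ) T,
      derivWithin (fun s => u y s) (Icc (0:ℝ) T) t
        + derivWithin (fun z => η z t) (Icc (0:ℝ) 1) y
        + (3/2) * (u y t * derivWithin (fun z => u z t) (Icc (0:ℝ) 1) y)
        + (1/2) * (η y t * derivWithin (fun z => η z t) (Icc (0:ℝ) 1) y) = 0)
    (hbc : ∀ t ∈ Icc (0:ℝ) T, u 0 t = 0 ∧ u 1 t = 0)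
    (hic : ∀ y ∈ Icc (0:ℝ) 1, η y 0 = η₀ y ∧ u y 0 = u₀ y) :
    ∀ t ∈ Icc (0:ℝ) T,
      (∫ y in (0:ℝ)..1, (η y t ^ 2 + u y t ^ 2))
        = ∫ y in (0:ℝ)..1, (η₀ y ^ 2 + u₀ y ^ 2) := by
  intro t ht
  have hηd := hηreg.differentiableOn (f := uncurry η) one_ne_zero
  have hud := hureg.differentiableOn (f := uncurry u) one_ne_zero
  have hηt := hηreg.continuousOn_derivWithin_uncurry_left (f := η) (uniqueDiffOn_Icc one_pos)
    (uniqueDiffOn_Icc hT)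
  have hut := hureg.continuousOn_derivWithin_uncurry_left (f := u) (uniqueDiffOn_Icc one_pos)
    (uniqueDiffOn_Icc hT)
  calc (∫ y in (0:ℝ)..1, (η y t ^ 2 + u y t ^ 2)) = ∫ y in (0:ℝ)..1, (η y 0 ^ 2 + u y 0 ^ 2) :=
        integral_eq_of_hasDerivWithinAt_flux (F := fun y s => η y s ^ 2 + u y s ^ 2)
          (f := fun y s => 2 * η y s * derivWithin (fun τ => η y τ) (Icc 0 T) s
            + 2 * u y s * derivWithin (fun τ => u y τ) (Icc 0 T) s) zero_le_one
          ((hηreg.continuousOn.fun_pow 2).fun_add (hureg.continuousOn.fun_pow 2))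
          (((continuousOn_const.fun_mul hηreg.continuousOn).fun_mul hηt).fun_add
            ((continuousOn_const.fun_mul hureg.continuousOn).fun_mul hut))
          (fun x hx s hs => (((hηd.uncurry_left hx s hs).hasDerivWithinAt.fun_pow 2).fun_add
            ((hud.uncurry_left hx s hs).hasDerivWithinAt.fun_pow 2)).congr_deriv (by ring))
          (fun x hx s hs => hasDerivWithinAt_ssw_energyFlux (uniqueDiffOn_Icc one_pos x hx)
            (hηd.uncurry_right hs x hx) (hud.uncurry_right hs x hx)
            (hpde1 x hx s hs) (hpde2 x hx s hs))
          (fun s hs => by simp [hbc s hs]) ht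
    _ = ∫ y in (0:ℝ)..1, (η₀ y ^ 2 + u₀ y ^ 2) := by
        refine intervalIntegral.integral_congr fun y hy => ?_
        rw [uIcc_of_le zero_le_one] at hy
        simp only [(hic y hy).1, (hic y hy).2]
end

section
/- Let u ∈ C₀⁴ with u''(0) = u''(1) = 0, and let σ = u − P₀u. Then there exists a constant C, depending only on ‖u⁽⁴⁾‖_{L^∞(0,1)} and not on N, such that for all N ≥ 2, max_{1≤i≤N} |∫_{I_i} σ(x) dx| ≤ C h⁵. -/
/-!
Write `h = 1/N`, `x_k = k h`, `M = ‖u⁗‖_∞`, and correct the nodal error of the projection to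
`e_k = u(x_k) - h² u''(x_k) / 12 - P₀u(x_k)`. Testing the orthogonality of `u - P₀u` against
the hat function at `x_{j+1}` expresses `e_j + 4 e_{j+1} + e_{j+2}` as the error of a
hat-weighted quadrature rule for `u` that is exact on cubics, so Taylor's theorem gives
`|e_j + 4 e_{j+1} + e_{j+2}| ≤ 18 M h⁴`. Since `u` and `u''` vanish at both ends, so do
`e_0` and `e_N`, and the discrete maximum principle for the stencil `(1, 4, 1)` yields
`|e_k| ≤ 9 M h⁴`. Finally, on a cell
`∫ (u - P₀u) = (∫ u - corrected trapezoidal rule) + h (e_i + e_{i+1}) / 2`, and the corrected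
trapezoidal rule `h (u_i + u_{i+1}) / 2 - h³ (u''_i + u''_{i+1}) / 24` is again exact on cubics.
-/

noncomputable section
open Set

/-- The L²(0,1) inner product of two real functions. -/
def ip (f g : ℝ → ℝ) : ℝ := ∫ y in (0:ℝ)..1, f y * g y

/-- The L²(0,1) norm. -/
def nrm (f : ℝ → ℝ) : ℝ := Real.sqrt (∫ y in (0:ℝ)..1, (f y)^2)

/-- `g` is the L²(0,1)-orthogonal projection of `f` onto `S`. -/
def IsL2ProjOn (S : Set (ℝ → ℝ)) (f g : ℝ → ℝ) : Prop :=
  g ∈ S ∧ ∀ χ ∈ S, ip (fun y => f y - g y) χ = 0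

/-- Continuous piecewise linear functions on the uniform mesh of `[0,1]`
with `N` subintervals. -/
def PL (N : ℕ) : Set (ℝ → ℝ) :=
  {φ | ContinuousOn φ (Icc (0:ℝ) 1) ∧
    ∀ i < N, ∃ a b : ℝ, ∀ y ∈ Icc ((i : ℝ)/N) (((i : ℝ)+1)/N), φ y = a * y + b}

/-- Elements of `PL N` vanishing at 0 and 1. -/
def PL0 (N : ℕ) : Set (ℝ → ℝ) := {φ | φ ∈ PL N ∧ φ 0 = 0 ∧ φ 1 = 0}

open intervalIntegral
open MeasureTheory (volume)

section Taylor

variable {f : ℝ → ℝ} {s : Set ℝ}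

theorem ContDiffOn.iteratedDerivWithin {m k : ℕ} (hf : ContDiffOn ℝ (m + k : ℕ) f s)
    (hs : UniqueDiffOn ℝ s) : ContDiffOn ℝ m (iteratedDerivWithin k f s) s := by
  induction k generalizing m with
  | zero => simpa using hf
  | succ k ih =>
    rw [iteratedDerivWithin_succ]
    exact (ih (m := m + 1) (by rwa [Nat.add_right_comm, Nat.add_assoc])).derivWithin hs
      (by push_cast; rfl)

theorem iteratedDerivWithin_iteratedDerivWithin (m n : ℕ) :
    iteratedDerivWithin m (iteratedDerivWithin n f s) s = iteratedDerivWithin (m + n) f s := by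
  induction m with
  | zero => simp
  | succ m ih => rw [iteratedDerivWithin_succ, ih, ← iteratedDerivWithin_succ, Nat.succ_add]

theorem abs_le_mul_abs_sub_pow_succ_of_hasDerivWithinAt {f' : ℝ → ℝ} {a x K : ℝ} {m : ℕ}
    (hs : Convex ℝ s) (ha : a ∈ s) (hx : x ∈ s) (hK : 0 ≤ K)
    (hf : ∀ y ∈ s, HasDerivWithinAt f (f' y) s y) (hfa : f a = 0)
    (hf' : ∀ y ∈ s, |f' y| ≤ K * |y - a| ^ m) :
    |f x| ≤ K * |x - a| ^ (m + 1) := by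
  have hsub : uIcc a x ⊆ s := hs.ordConnected.uIcc_subset ha hx
  have hbound : ∀ y ∈ uIcc a x, ‖f' y‖ ≤ K * |x - a| ^ m := fun y hy =>
    (hf' y (hsub hy)).trans <| mul_le_mul_of_nonneg_left
      (pow_le_pow_left₀ (abs_nonneg _) (abs_sub_left_of_mem_uIcc hy) m) hK
  have := (convex_uIcc a x).norm_image_sub_le_of_norm_hasDerivWithin_le
    (fun y hy => (hf y (hsub hy)).mono hsub) hbound left_mem_uIcc right_mem_uIcc
  simpa [hfa, pow_succ, mul_assoc] using this

/-- Unlike in `taylor_mean_remainder_bound`, the base point `a` may lie anywhere in `s`. -/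
theorem abs_sub_taylorWithinEval_le {n : ℕ} {M a x : ℝ} (hs : Convex ℝ s)
    (hs' : UniqueDiffOn ℝ s) (hf : ContDiffOn ℝ (n + 1) f s)
    (hM : ∀ y ∈ s, |iteratedDerivWithin (n + 1) f s y| ≤ M) (ha : a ∈ s) (hx : x ∈ s) :
    |f x - taylorWithinEval f n s a x| ≤ M * |x - a| ^ (n + 1) := by
  have hM0 : 0 ≤ M := (abs_nonneg _).trans (hM a ha)
  have hdf : ∀ y ∈ s, HasDerivWithinAt f (derivWithin f s y) s y := fun y hy =>
    ((hf.differentiableOn (by simp)) y hy).hasDerivWithinAt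
  induction n generalizing f x with
  | zero =>
    rw [taylor_within_zero_eval]
    refine abs_le_mul_abs_sub_pow_succ_of_hasDerivWithinAt hs ha hx hM0
      (fun y hy => (hdf y hy).sub_const (f a)) (sub_self _) fun y hy => ?_
    simpa using hM y hy
  | succ n ih =>
    refine abs_le_mul_abs_sub_pow_succ_of_hasDerivWithinAt hs ha hx hM0
      (fun y hy => (hdf y hy).sub (hasDerivAt_taylorWithinEval_succ f n).hasDerivWithinAt)
      (by simp) fun y hy => ?_
    have hf' : ContDiffOn ℝ (n + 1) (derivWithin f s) s :=
      hf.derivWithin hs' (by push_cast; rfl)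
    refine ih hf' (fun z hz => ?_) hy fun z hz => ?_
    · rw [← iteratedDerivWithin_succ']
      exact hM z hz
    · exact ((hf'.differentiableOn (by simp)) z hz).hasDerivWithinAt

variable {M a x : ℝ}

theorem abs_sub_cubicTaylor_le (hs : Convex ℝ s) (hs' : UniqueDiffOn ℝ s)
    (hf : ContDiffOn ℝ 4 f s) (hM : ∀ y ∈ s, |iteratedDerivWithin 4 f s y| ≤ M)
    (ha : a ∈ s) (hx : x ∈ s) :
    |f x - (f a + iteratedDerivWithin 1 f s a * (x - a)
      + iteratedDerivWithin 2 f s a * (x - a) ^ 2 / 2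
      + iteratedDerivWithin 3 f s a * (x - a) ^ 3 / 6)| ≤ M * |x - a| ^ 4 := by
  convert abs_sub_taylorWithinEval_le (n := 3) hs hs' hf hM ha hx using 3
  simp [taylor_within_apply, Nat.factorial]
  ring

theorem abs_iteratedDerivWithin_two_sub_linearTaylor_le (hs : Convex ℝ s)
    (hs' : UniqueDiffOn ℝ s) (hf : ContDiffOn ℝ 4 f s)
    (hM : ∀ y ∈ s, |iteratedDerivWithin 4 f s y| ≤ M) (ha : a ∈ s) (hx : x ∈ s) :
    |iteratedDerivWithin 2 f s x
      - (iteratedDerivWithin 2 f s a + iteratedDerivWithin 3 f s a * (x - a))|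
      ≤ M * |x - a| ^ 2 := by
  convert abs_sub_taylorWithinEval_le (n := 1) (f := iteratedDerivWithin 2 f s) hs hs'
    (ContDiffOn.iteratedDerivWithin (m := 2) hf hs')
    (by simpa [iteratedDerivWithin_iteratedDerivWithin] using hM) ha hx using 3
  simp [taylor_within_apply, ← iteratedDerivWithin_succ, mul_comm]

end Taylor

section Integrals

theorem integral_quartic (a p q e₀ e₁ e₂ e₃ e₄ : ℝ) :
    ∫ y in p..q,
        (e₀ + e₁ * (y - a) + e₂ * (y - a) ^ 2 + e₃ * (y - a) ^ 3 + e₄ * (y - a) ^ 4)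
      = (e₀ * (q - a) + e₁ * (q - a) ^ 2 / 2 + e₂ * (q - a) ^ 3 / 3 + e₃ * (q - a) ^ 4 / 4
          + e₄ * (q - a) ^ 5 / 5)
        - (e₀ * (p - a) + e₁ * (p - a) ^ 2 / 2 + e₂ * (p - a) ^ 3 / 3 + e₃ * (p - a) ^ 4 / 4
          + e₄ * (p - a) ^ 5 / 5) := by
  have hmon : ∀ k : ℕ, ∀ y : ℝ,
      HasDerivAt (fun y => (y - a) ^ (k + 1) / (k + 1)) ((y - a) ^ k) y := fun k y => by
    refine ((((hasDerivAt_id y).sub_const a).pow (k + 1)).div_const _).congr_deriv ?_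
    rw [Nat.add_sub_cancel]
    push_cast
    field_simp
    rfl
  refine integral_eq_sub_of_hasDerivAt (f := fun t => e₀ * (t - a) + e₁ * (t - a) ^ 2 / 2
    + e₂ * (t - a) ^ 3 / 3 + e₃ * (t - a) ^ 4 / 4 + e₄ * (t - a) ^ 5 / 5)
    (fun y _ => ?_) (Continuous.intervalIntegrable (by fun_prop) _ _)
  convert (((((hmon 0 y).const_mul e₀).add ((hmon 1 y).const_mul e₁)).add
    ((hmon 2 y).const_mul e₂)).add ((hmon 3 y).const_mul e₃)).add ((hmon 4 y).const_mul e₄)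
    using 1
  · funext y
    simp only [Pi.add_apply]
    push_cast
    ring
  · ring

theorem integral_cubic (p q c₀ c₁ c₂ c₃ : ℝ) :
    ∫ y in p..q, (c₀ + c₁ * (y - p) + c₂ * (y - p) ^ 2 / 2 + c₃ * (y - p) ^ 3 / 6)
      = c₀ * (q - p) + c₁ * (q - p) ^ 2 / 2 + c₂ * (q - p) ^ 3 / 6
        + c₃ * (q - p) ^ 4 / 24 := by
  rw [integral_congr (g := fun y => c₀ + c₁ * (y - p) + c₂ / 2 * (y - p) ^ 2
    + c₃ / 6 * (y - p) ^ 3 + 0 * (y - p) ^ 4) fun y _ => by ring, integral_quartic]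
  ring

theorem abs_integral_sub_integral_le {f g : ℝ → ℝ} {p q K : ℝ} (hpq : p ≤ q)
    (hf : IntervalIntegrable f volume p q) (hg : IntervalIntegrable g volume p q)
    (hK : ∀ y ∈ Icc p q, |f y - g y| ≤ K) :
    |(∫ y in p..q, f y) - ∫ y in p..q, g y| ≤ K * (q - p) := by
  rw [← integral_sub hf hg]
  have := norm_integral_le_of_norm_le_const (C := K) fun y hy => by
    rw [Real.norm_eq_abs]
    exact hK y (Ioc_subset_Icc_self (uIoc_of_le hpq ▸ hy))
  simpa [abs_of_nonneg (sub_nonneg.2 hpq)] using this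

theorem abs_integral_mul_sub_integral_mul_le {f g w : ℝ → ℝ} {p q K W : ℝ} (hpq : p ≤ q)
    (hf : ContinuousOn f (Icc p q)) (hg : ContinuousOn g (Icc p q))
    (hw : ContinuousOn w (Icc p q)) (hK : ∀ y ∈ Icc p q, |f y - g y| ≤ K)
    (hW : ∀ y ∈ Icc p q, |w y| ≤ W) :
    |(∫ y in p..q, f y * w y) - ∫ y in p..q, g y * w y| ≤ K * W * (q - p) := by
  refine abs_integral_sub_integral_le hpq ((hf.mul hw).intervalIntegrable_of_Icc hpq)
    ((hg.mul hw).intervalIntegrable_of_Icc hpq) fun y hy => ?_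
  rw [← sub_mul, abs_mul]
  exact mul_le_mul (hK y hy) (hW y hy) (abs_nonneg _) ((abs_nonneg _).trans (hK y hy))

theorem abs_mul_le_mul_of_abs_le {c x B : ℝ} (hc : 0 ≤ c) (hx : |x| ≤ B) :
    |c * x| ≤ c * B := by
  rw [abs_mul, abs_of_nonneg hc]
  exact mul_le_mul_of_nonneg_left hx hc

end Integrals

section Affine

variable {g : ℝ → ℝ} {p q α β : ℝ}

theorem integral_eq_of_eqOn_affine (hpq : p ≤ q) (hg : ∀ y ∈ Icc p q, g y = α * y + β) :
    ∫ y in p..q, g y = (q - p) / 2 * (g p + g q) := by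
  rw [integral_congr (g := fun y => (α * p + β) + α * (y - p) + 0 * (y - p) ^ 2
      + 0 * (y - p) ^ 3 + 0 * (y - p) ^ 4) fun y hy => by
        rw [uIcc_of_le hpq] at hy; simp only [hg y hy]; ring,
    integral_quartic, hg p (left_mem_Icc.2 hpq), hg q (right_mem_Icc.2 hpq)]
  ring

theorem integral_mul_sub_left_eq_of_eqOn_affine (hpq : p ≤ q)
    (hg : ∀ y ∈ Icc p q, g y = α * y + β) :
    ∫ y in p..q, g y * (y - p) = (q - p) ^ 2 / 6 * (g p + 2 * g q) := by
  rw [integral_congr (g := fun y => 0 + (α * p + β) * (y - p) + α * (y - p) ^ 2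
      + 0 * (y - p) ^ 3 + 0 * (y - p) ^ 4) fun y hy => by
        rw [uIcc_of_le hpq] at hy; simp only [hg y hy]; ring,
    integral_quartic, hg p (left_mem_Icc.2 hpq), hg q (right_mem_Icc.2 hpq)]
  ring

theorem integral_mul_sub_right_eq_of_eqOn_affine (hpq : p ≤ q)
    (hg : ∀ y ∈ Icc p q, g y = α * y + β) :
    ∫ y in p..q, g y * (q - y) = (q - p) ^ 2 / 6 * (2 * g p + g q) := by
  rw [integral_congr (g := fun y => (α * p + β) * (q - p)
      + (α * (q - p) - (α * p + β)) * (y - p) + (-α) * (y - p) ^ 2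
      + 0 * (y - p) ^ 3 + 0 * (y - p) ^ 4) fun y hy => by
        rw [uIcc_of_le hpq] at hy; simp only [hg y hy]; ring,
    integral_quartic, hg p (left_mem_Icc.2 hpq), hg q (right_mem_Icc.2 hpq)]
  ring

end Affine

def hatMoment (f : ℝ → ℝ) (p a q : ℝ) : ℝ :=
  (∫ y in p..a, f y * (y - p)) + ∫ y in a..q, f y * (q - y)

theorem hatMoment_cubic (a h c₀ c₁ c₂ c₃ : ℝ) :
    hatMoment (fun y => c₀ + c₁ * (y - a) + c₂ * (y - a) ^ 2 / 2 + c₃ * (y - a) ^ 3 / 6)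
      (a - h) a (a + h) = c₀ * h ^ 2 + c₂ * h ^ 4 / 12 := by
  have hleft : ∫ y in (a - h)..a,
      (c₀ + c₁ * (y - a) + c₂ * (y - a) ^ 2 / 2 + c₃ * (y - a) ^ 3 / 6) * (y - (a - h))
      = c₀ * h ^ 2 / 2 - c₁ * h ^ 3 / 6 + c₂ * h ^ 4 / 24 - c₃ * h ^ 5 / 120 := by
    rw [integral_congr (g := fun y => c₀ * h + (c₀ + c₁ * h) * (y - a)
      + (c₁ + c₂ * h / 2) * (y - a) ^ 2 + (c₂ / 2 + c₃ * h / 6) * (y - a) ^ 3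
      + c₃ / 6 * (y - a) ^ 4) fun y _ => by ring, integral_quartic]
    ring
  have hright : ∫ y in a..(a + h),
      (c₀ + c₁ * (y - a) + c₂ * (y - a) ^ 2 / 2 + c₃ * (y - a) ^ 3 / 6) * (a + h - y)
      = c₀ * h ^ 2 / 2 + c₁ * h ^ 3 / 6 + c₂ * h ^ 4 / 24 + c₃ * h ^ 5 / 120 := by
    rw [integral_congr (g := fun y => c₀ * h + (c₁ * h - c₀) * (y - a)
      + (c₂ * h / 2 - c₁) * (y - a) ^ 2 + (c₃ * h / 6 - c₂ / 2) * (y - a) ^ 3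
      + (-c₃ / 6) * (y - a) ^ 4) fun y _ => by ring, integral_quartic]
    ring
  rw [hatMoment, hleft, hright]
  ring

section Quadrature

variable {s : Set ℝ} {u : ℝ → ℝ} {M : ℝ}

theorem abs_integral_sub_correctedTrapezoid_le (hs : Convex ℝ s) (hs' : UniqueDiffOn ℝ s)
    (hu : ContDiffOn ℝ 4 u s) (hM : ∀ y ∈ s, |iteratedDerivWithin 4 u s y| ≤ M)
    {p q : ℝ} (hpq : p ≤ q) (hp : p ∈ s) (hq : q ∈ s) :
    |(∫ y in p..q, u y) - ((q - p) / 2 * (u p + u q)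
      - (q - p) ^ 3 / 24 * (iteratedDerivWithin 2 u s p + iteratedDerivWithin 2 u s q))|
      ≤ 2 * M * (q - p) ^ 5 := by
  have hsub : Icc p q ⊆ s := hs.ordConnected.out hp hq
  have hM0 : 0 ≤ M := (abs_nonneg _).trans (hM p hp)
  have hR := abs_sub_cubicTaylor_le hs hs' hu hM hp hq
  have hS := abs_iteratedDerivWithin_two_sub_linearTaylor_le hs hs' hu hM hp hq
  have hI := abs_integral_sub_integral_le (K := M * (q - p) ^ 4) hpq
    ((hu.continuousOn.mono hsub).intervalIntegrable_of_Icc hpq)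
    (Continuous.intervalIntegrable (by fun_prop) _ _) fun y hy =>
      (abs_sub_cubicTaylor_le hs hs' hu hM hp (hsub hy)).trans <| by
        gcongr
        rw [abs_of_nonneg (by linarith [hy.1])]
        linarith [hy.2]
  rw [integral_cubic] at hI
  set h := q - p
  have h0 : 0 ≤ h := sub_nonneg.2 hpq
  rw [abs_of_nonneg h0] at hR hS
  obtain ⟨l₁, r₁⟩ := abs_le.mp hI
  have hc₁ : 0 ≤ h / 2 := by positivity
  have hc₂ : 0 ≤ h ^ 3 / 24 := by positivity
  obtain ⟨l₂, r₂⟩ := abs_le.mp (abs_mul_le_mul_of_abs_le hc₁ hR)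
  obtain ⟨l₃, r₃⟩ := abs_le.mp (abs_mul_le_mul_of_abs_le hc₂ hS)
  have hMh : 0 ≤ M * h ^ 5 := by positivity
  rw [abs_le]
  constructor <;> linarith

theorem abs_hatMoment_sub_le (hs : Convex ℝ s) (hs' : UniqueDiffOn ℝ s)
    (hu : ContDiffOn ℝ 4 u s) (hM : ∀ y ∈ s, |iteratedDerivWithin 4 u s y| ≤ M)
    {a h : ℝ} (h0 : 0 ≤ h) (hl : a - h ∈ s) (hr : a + h ∈ s) :
    |hatMoment u (a - h) a (a + h) - (h ^ 2 / 6 * (u (a - h) + 4 * u a + u (a + h))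
      - h ^ 4 / 72 * (iteratedDerivWithin 2 u s (a - h) + 4 * iteratedDerivWithin 2 u s a
        + iteratedDerivWithin 2 u s (a + h)))| ≤ 3 * M * h ^ 6 := by
  have hsub : Icc (a - h) (a + h) ⊆ s := hs.ordConnected.out hl hr
  have ha : a ∈ s := hsub ⟨by linarith, by linarith⟩
  have hM0 : 0 ≤ M := (abs_nonneg _).trans (hM a ha)
  have hRl := abs_sub_cubicTaylor_le hs hs' hu hM ha hl
  have hRr := abs_sub_cubicTaylor_le hs hs' hu hM ha hr
  have hSl := abs_iteratedDerivWithin_two_sub_linearTaylor_le hs hs' hu hM ha hl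
  have hSr := abs_iteratedDerivWithin_two_sub_linearTaylor_le hs hs' hu hM ha hr
  simp only [sub_sub_cancel_left, add_sub_cancel_left, abs_neg, abs_of_nonneg h0]
    at hRl hRr hSl hSr
  set T := fun y => u a + iteratedDerivWithin 1 u s a * (y - a)
    + iteratedDerivWithin 2 u s a * (y - a) ^ 2 / 2 + iteratedDerivWithin 3 u s a * (y - a) ^ 3 / 6
  have hweighted : ∀ {p q : ℝ} {w : ℝ → ℝ}, a - h ≤ p → p ≤ q → q ≤ a + h →
      Continuous w → (∀ y ∈ Icc p q, |w y| ≤ h) →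
      |(∫ y in p..q, u y * w y) - ∫ y in p..q, T y * w y| ≤ M * h ^ 4 * h * (q - p) :=
    fun hp hpq hq hw hW => abs_integral_mul_sub_integral_mul_le hpq
      (hu.continuousOn.mono ((Icc_subset_Icc hp hq).trans hsub))
      (Continuous.continuousOn (by fun_prop)) hw.continuousOn (fun y hy =>
        (abs_sub_cubicTaylor_le hs hs' hu hM ha
          (hsub ⟨hp.trans hy.1, hy.2.trans hq⟩)).trans <| by
          gcongr
          exact abs_sub_le_iff.2 ⟨by linarith [hy.2], by linarith [hy.1]⟩) hW
  obtain ⟨l₁, r₁⟩ := abs_le.mp (hweighted (p := a - h) (q := a) (w := fun y => y - (a - h))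
    le_rfl (by linarith) (by linarith) (by fun_prop) fun y hy => by
      rw [abs_le]; constructor <;> linarith [hy.1, hy.2])
  obtain ⟨l₂, r₂⟩ := abs_le.mp (hweighted (p := a) (q := a + h) (w := fun y => a + h - y)
    (by linarith) (by linarith) le_rfl (by fun_prop) fun y hy => by
      rw [abs_le]; constructor <;> linarith [hy.1, hy.2])
  have hT := hatMoment_cubic a h (u a) (iteratedDerivWithin 1 u s a) (iteratedDerivWithin 2 u s a)
    (iteratedDerivWithin 3 u s a)
  simp only [hatMoment] at hT ⊢
  have hc₁ : 0 ≤ h ^ 2 / 6 := by positivity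
  have hc₂ : 0 ≤ h ^ 4 / 72 := by positivity
  obtain ⟨l₃, r₃⟩ := abs_le.mp (abs_mul_le_mul_of_abs_le hc₁ hRl)
  obtain ⟨l₄, r₄⟩ := abs_le.mp (abs_mul_le_mul_of_abs_le hc₁ hRr)
  obtain ⟨l₅, r₅⟩ := abs_le.mp (abs_mul_le_mul_of_abs_le hc₂ hSl)
  obtain ⟨l₆, r₆⟩ := abs_le.mp (abs_mul_le_mul_of_abs_le hc₂ hSr)
  have hMh : 0 ≤ M * h ^ 6 := by positivity
  rw [abs_le]
  constructor <;> linarith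

end Quadrature

theorem abs_le_half_of_abs_add_four_mul_add_le {ε : ℕ → ℝ} {N : ℕ} {B : ℝ} (hB : 0 ≤ B)
    (h0 : ε 0 = 0) (hN : ε N = 0)
    (h : ∀ j, j + 2 ≤ N → |ε j + 4 * ε (j + 1) + ε (j + 2)| ≤ B)
    {k : ℕ} (hk : k ≤ N) : |ε k| ≤ B / 2 := by
  obtain ⟨m, hm, hmax⟩ := Finset.exists_max_image (Finset.range (N + 1)) (fun j => |ε j|)
    ⟨0, by simp⟩
  have hmN : m ≤ N := Nat.lt_succ_iff.mp (Finset.mem_range.mp hm)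
  refine (hmax k (Finset.mem_range.mpr (Nat.lt_succ_of_le hk))).trans ?_
  rcases m with _ | m
  · rw [h0, abs_zero]; positivity
  rcases hmN.eq_or_lt with rfl | hlt
  · rw [hN, abs_zero]; positivity
  have hl := hmax m (Finset.mem_range.mpr (by omega))
  have hr := hmax (m + 2) (Finset.mem_range.mpr (by omega))
  have h4 := abs_add_three (ε m + 4 * ε (m + 1) + ε (m + 2)) (-ε m) (-ε (m + 2))
  rw [show ε m + 4 * ε (m + 1) + ε (m + 2) + -ε m + -ε (m + 2) = 4 * ε (m + 1) by ring,
    abs_mul, abs_neg, abs_neg, abs_of_pos four_pos] at h4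
  linarith [h m (by omega)]

theorem mul_mem_Icc_of_mem_Icc_div {a b c y : ℝ} (hc : 0 < c) (hy : y ∈ Icc (a / c) (b / c)) :
    c * y ∈ Icc a b :=
  ⟨by rw [mul_comm, ← div_le_iff₀ hc]; exact hy.1,
    by rw [mul_comm, ← le_div_iff₀ hc]; exact hy.2⟩

section Hat

variable {N j : ℕ} {y : ℝ}

def hat (N j : ℕ) (y : ℝ) : ℝ := max 0 (1 - |N * y - j|)

theorem continuous_hat : Continuous (hat N j) := by
  unfold hat
  fun_prop

theorem hat_eq_zero_of_le (h : N * y ≤ j - 1) : hat N j y = 0 := by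
  rw [hat, abs_of_nonpos (by linarith), max_eq_left (by linarith)]

theorem hat_eq_zero_of_ge (h : j + 1 ≤ N * y) : hat N j y = 0 := by
  rw [hat, abs_of_nonneg (by linarith), max_eq_left (by linarith)]

theorem hat_eq_left (h₁ : j - 1 ≤ N * y) (h₂ : N * y ≤ j) :
    hat N j y = N * y - (j - 1) := by
  rw [hat, abs_of_nonpos (by linarith), max_eq_right (by linarith)]
  ring

theorem hat_eq_right (h₁ : j ≤ N * y) (h₂ : N * y ≤ j + 1) :
    hat N j y = j + 1 - N * y := by
  rw [hat, abs_of_nonneg (by linarith), max_eq_right (by linarith)]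
  ring

theorem hat_mem_PL0 (hj : 1 ≤ j) (hjN : j < N) : hat N j ∈ PL0 N := by
  have hj' : (1 : ℝ) ≤ j := by exact_mod_cast hj
  have hjN' : (j : ℝ) + 1 ≤ N := by exact_mod_cast hjN
  refine ⟨⟨continuous_hat.continuousOn, fun k hk => ?_⟩,
    hat_eq_zero_of_le (by simpa using hj'), hat_eq_zero_of_ge (by simpa using hjN')⟩
  have hcell := fun y (hy : y ∈ Icc ((k : ℝ) / N) ((k + 1) / N)) =>
    mul_mem_Icc_of_mem_Icc_div (Nat.cast_pos.2 (by omega : 0 < N)) hy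
  rcases lt_trichotomy (k + 1) j with h | h | h
  · have : (k : ℝ) + 2 ≤ j := by exact_mod_cast h
    exact ⟨0, 0, fun y hy => by rw [hat_eq_zero_of_le (by linarith [(hcell y hy).2])]; ring⟩
  · have : (k : ℝ) + 1 = j := by exact_mod_cast h
    exact ⟨N, 1 - j, fun y hy => by
      rw [hat_eq_left (by linarith [(hcell y hy).1]) (by linarith [(hcell y hy).2])]; ring⟩
  rcases (Nat.lt_succ_iff.mp h).eq_or_lt with h' | h'
  · have : (j : ℝ) = k := by exact_mod_cast h'
    exact ⟨-N, j + 1, fun y hy => by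
      rw [hat_eq_right (by linarith [(hcell y hy).1]) (by linarith [(hcell y hy).2])]; ring⟩
  · have : (j : ℝ) + 1 ≤ k := by exact_mod_cast h'
    exact ⟨0, 0, fun y hy => by rw [hat_eq_zero_of_ge (by linarith [(hcell y hy).1])]; ring⟩

end Hat

section Galerkin

variable {N j : ℕ}

theorem integral_mul_hat {f : ℝ → ℝ} (hf : ContinuousOn f (Icc 0 1)) (hj : j + 2 ≤ N) :
    ∫ y in (0 : ℝ)..1, f y * hat N (j + 1) y
      = N * hatMoment f (j / N) ((j + 1) / N) ((j + 2) / N) := by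
  have hN : (0 : ℝ) < N := by exact_mod_cast (by omega : 0 < N)
  have hjN : (j : ℝ) + 2 ≤ N := by exact_mod_cast hj
  have h₀ : (0 : ℝ) ≤ j / N := by positivity
  have h₁ : (j : ℝ) / N ≤ (j + 1) / N := by gcongr; linarith
  have h₂ : ((j : ℝ) + 1) / N ≤ (j + 2) / N := by gcongr; linarith
  have h₃ : ((j : ℝ) + 2) / N ≤ 1 := (div_le_one hN).2 hjN
  have hint : ∀ p q : ℝ, 0 ≤ p → p ≤ q → q ≤ 1 →
      IntervalIntegrable (fun y => f y * hat N (j + 1) y) volume p q := fun p q hp hpq hq =>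
    ((hf.mul continuous_hat.continuousOn).mono (Icc_subset_Icc hp hq)).intervalIntegrable_of_Icc hpq
  have hNy : ∀ {y c : ℝ}, c / N ≤ y → c ≤ N * y := fun h => by
    rwa [div_le_iff₀ hN, mul_comm] at h
  have hyN : ∀ {y c : ℝ}, y ≤ c / N → N * y ≤ c := fun h => by
    rwa [le_div_iff₀ hN, mul_comm] at h
  rw [← integral_add_adjacent_intervals (hint _ _ le_rfl h₀ (by linarith))
      (hint _ _ h₀ (by linarith) le_rfl),
    ← integral_add_adjacent_intervals (hint _ _ h₀ h₁ (by linarith))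
      (hint _ _ (by linarith) (by linarith) le_rfl),
    ← integral_add_adjacent_intervals (hint _ _ (by linarith) h₂ h₃)
      (hint _ _ (by linarith) h₃ le_rfl)]
  have hbefore : ∫ y in (0 : ℝ)..(j / N), f y * hat N (j + 1) y = 0 := by
    rw [integral_congr (g := fun _ => 0) fun y hy => ?_, integral_zero]
    rw [uIcc_of_le h₀] at hy
    rw [hat_eq_zero_of_le (by push_cast; linarith [hyN hy.2]), mul_zero]
  have hafter : ∫ y in ((j : ℝ) + 2) / N..1, f y * hat N (j + 1) y = 0 := by
    rw [integral_congr (g := fun _ => 0) fun y hy => ?_, integral_zero]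
    rw [uIcc_of_le h₃] at hy
    rw [hat_eq_zero_of_ge (by push_cast; linarith [hNy hy.1]), mul_zero]
  have hup : ∫ y in (j / N : ℝ)..((j + 1) / N), f y * hat N (j + 1) y
      = N * ∫ y in (j / N : ℝ)..((j + 1) / N), f y * (y - j / N) := by
    rw [← integral_const_mul]
    refine integral_congr fun y hy => ?_
    rw [uIcc_of_le h₁] at hy
    rw [hat_eq_left (by push_cast; linarith [hNy hy.1]) (by push_cast; linarith [hyN hy.2])]
    field_simp
    push_cast
    ring
  have hdown : ∫ y in ((j : ℝ) + 1) / N..((j + 2) / N), f y * hat N (j + 1) y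
      = N * ∫ y in ((j : ℝ) + 1) / N..((j + 2) / N), f y * ((j + 2) / N - y) := by
    rw [← integral_const_mul]
    refine integral_congr fun y hy => ?_
    rw [uIcc_of_le h₂] at hy
    rw [hat_eq_right (by push_cast; linarith [hNy hy.1]) (by push_cast; linarith [hyN hy.2])]
    field_simp
    push_cast
    ring
  rw [hbefore, hafter, hup, hdown, hatMoment]
  ring

theorem hatMoment_eq_of_isL2ProjOn {u Pu : ℝ → ℝ} (hP : IsL2ProjOn (PL0 N) u Pu)
    (hu : ContinuousOn u (Icc 0 1)) (hj : j + 2 ≤ N) :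
    hatMoment u (j / N) ((j + 1) / N) ((j + 2) / N)
      = hatMoment Pu (j / N) ((j + 1) / N) ((j + 2) / N) := by
  have hPu : ContinuousOn Pu (Icc 0 1) := hP.1.1.1
  have hhat : ContinuousOn (hat N (j + 1)) (Icc 0 1) := continuous_hat.continuousOn
  have horth := hP.2 _ (hat_mem_PL0 (N := N) (j := j + 1) (by omega) (by omega))
  rw [ip, integral_congr (g := fun y => u y * hat N (j + 1) y - Pu y * hat N (j + 1) y)
      fun y _ => sub_mul _ _ _,
    integral_sub (f := fun y => u y * hat N (j + 1) y) (g := fun y => Pu y * hat N (j + 1) y)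
      ((hu.mul hhat).intervalIntegrable_of_Icc zero_le_one)
      ((hPu.mul hhat).intervalIntegrable_of_Icc zero_le_one),
    integral_mul_hat hu hj, integral_mul_hat hPu hj, ← mul_sub] at horth
  have hN : (N : ℝ) ≠ 0 := by exact_mod_cast (by omega : N ≠ 0)
  exact sub_eq_zero.1 ((mul_eq_zero.1 horth).resolve_left hN)

theorem hatMoment_of_mem_PL {g : ℝ → ℝ} (hg : g ∈ PL N) (hj : j + 2 ≤ N) :
    hatMoment g (j / N) ((j + 1) / N) ((j + 2) / N)
      = (1 / N) ^ 2 / 6 * (g (j / N) + 4 * g ((j + 1) / N) + g ((j + 2) / N)) := by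
  obtain ⟨α₁, β₁, h₁⟩ := hg.2 j (by omega)
  obtain ⟨α₂, β₂, h₂⟩ := hg.2 (j + 1) (by omega)
  push_cast at h₂
  rw [show (j : ℝ) + 1 + 1 = j + 2 by ring] at h₂
  have hN : (0 : ℝ) < N := by exact_mod_cast (by omega : 0 < N)
  rw [hatMoment, integral_mul_sub_left_eq_of_eqOn_affine (by gcongr; linarith) h₁,
    integral_mul_sub_right_eq_of_eqOn_affine (by gcongr; linarith) h₂]
  ring

theorem integral_of_mem_PL {g : ℝ → ℝ} {i : ℕ} (hg : g ∈ PL N) (hi : i < N) :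
    ∫ y in (i / N : ℝ)..((i + 1) / N), g y = 1 / N / 2 * (g (i / N) + g ((i + 1) / N)) := by
  obtain ⟨α, β, h⟩ := hg.2 i hi
  have hN : (0 : ℝ) < N := by exact_mod_cast (by omega : 0 < N)
  rw [integral_eq_of_eqOn_affine (by gcongr; linarith) h]
  ring

end Galerkin

def correctedNodalError (u Pu : ℝ → ℝ) (N k : ℕ) : ℝ :=
  u (k / N) - (1 / N : ℝ) ^ 2 / 12 * iteratedDerivWithin 2 u (Icc 0 1) (k / N) - Pu (k / N)

section NodalError

variable {u Pu : ℝ → ℝ} {N : ℕ} {M : ℝ}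

theorem abs_correctedNodalError_add_le (hu : ContDiffOn ℝ 4 u (Icc 0 1))
    (hM : ∀ y ∈ Icc (0 : ℝ) 1, |iteratedDerivWithin 4 u (Icc 0 1) y| ≤ M)
    (hP : IsL2ProjOn (PL0 N) u Pu) {j : ℕ} (hj : j + 2 ≤ N) :
    |correctedNodalError u Pu N j + 4 * correctedNodalError u Pu N (j + 1)
      + correctedNodalError u Pu N (j + 2)| ≤ 18 * M * (1 / N) ^ 4 := by
  have hN : (0 : ℝ) < N := by exact_mod_cast (by omega : 0 < N)
  have hjN : (j : ℝ) + 2 ≤ N := by exact_mod_cast hj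
  have e₁ : ((j : ℝ) + 1) / N - 1 / N = j / N := by ring
  have e₂ : ((j : ℝ) + 1) / N + 1 / N = (j + 2) / N := by ring
  have hl : ((j : ℝ) + 1) / N - 1 / N ∈ Icc (0 : ℝ) 1 := by
    rw [e₁]; exact ⟨by positivity, (div_le_one hN).2 (by linarith)⟩
  have hr : ((j : ℝ) + 1) / N + 1 / N ∈ Icc (0 : ℝ) 1 := by
    rw [e₂]; exact ⟨by positivity, (div_le_one hN).2 hjN⟩
  have hQ := abs_hatMoment_sub_le (convex_Icc 0 1) (uniqueDiffOn_Icc zero_lt_one) hu hM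
    (by positivity) hl hr
  rw [e₁, e₂, hatMoment_eq_of_isL2ProjOn hP hu.continuousOn hj,
    hatMoment_of_mem_PL hP.1.1 hj] at hQ
  have key : correctedNodalError u Pu N j + 4 * correctedNodalError u Pu N (j + 1)
      + correctedNodalError u Pu N (j + 2) = -(6 * N ^ 2) * ((1 / N) ^ 2 / 6 * (Pu (j / N)
        + 4 * Pu ((j + 1) / N) + Pu ((j + 2) / N)) - ((1 / N) ^ 2 / 6 * (u (j / N)
        + 4 * u ((j + 1) / N) + u ((j + 2) / N)) - (1 / N) ^ 4 / 72
        * (iteratedDerivWithin 2 u (Icc 0 1) (j / N)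
          + 4 * iteratedDerivWithin 2 u (Icc 0 1) ((j + 1) / N)
          + iteratedDerivWithin 2 u (Icc 0 1) ((j + 2) / N)))) := by
    simp only [correctedNodalError]
    push_cast
    field_simp
    ring
  rw [key, abs_mul, abs_neg, abs_of_pos (by positivity)]
  calc 6 * (N : ℝ) ^ 2 * _ ≤ 6 * N ^ 2 * (3 * M * (1 / N) ^ 6) := by gcongr
    _ = 18 * M * (1 / N) ^ 4 := by field_simp; ring

theorem abs_integral_sub_le_correctedNodalError (hu : ContDiffOn ℝ 4 u (Icc 0 1))
    (hM : ∀ y ∈ Icc (0 : ℝ) 1, |iteratedDerivWithin 4 u (Icc 0 1) y| ≤ M)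
    (hP : IsL2ProjOn (PL0 N) u Pu) {i : ℕ} (hi : i < N) :
    |∫ y in (i / N : ℝ)..((i + 1) / N), (u y - Pu y)| ≤ 2 * M * (1 / N) ^ 5
      + 1 / N / 2 * (|correctedNodalError u Pu N i| + |correctedNodalError u Pu N (i + 1)|) := by
  have hN : (0 : ℝ) < N := by exact_mod_cast (by omega : 0 < N)
  have hiN : (i : ℝ) + 1 ≤ N := by exact_mod_cast hi
  have hpq : (i : ℝ) / N ≤ (i + 1) / N := by gcongr; linarith
  have hq : ((i : ℝ) + 1) / N ≤ 1 := (div_le_one hN).2 hiN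
  have hcell : Icc ((i : ℝ) / N) ((i + 1) / N) ⊆ Icc 0 1 := Icc_subset_Icc (by positivity) hq
  have hT := abs_integral_sub_correctedTrapezoid_le (convex_Icc 0 1)
    (uniqueDiffOn_Icc zero_lt_one) hu hM hpq ⟨by positivity, hpq.trans hq⟩
    ⟨by positivity, hq⟩
  rw [show ((i : ℝ) + 1) / N - i / N = 1 / N by ring] at hT
  rw [integral_sub ((hu.continuousOn.mono hcell).intervalIntegrable_of_Icc hpq)
    ((hP.1.1.1.mono hcell).intervalIntegrable_of_Icc hpq), integral_of_mem_PL hP.1.1 hi]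
  have key : (∫ y in (i / N : ℝ)..((i + 1) / N), u y)
        - 1 / N / 2 * (Pu (i / N) + Pu ((i + 1) / N))
      = ((∫ y in (i / N : ℝ)..((i + 1) / N), u y) - (1 / N / 2 * (u (i / N) + u ((i + 1) / N))
        - (1 / N) ^ 3 / 24 * (iteratedDerivWithin 2 u (Icc 0 1) (i / N)
          + iteratedDerivWithin 2 u (Icc 0 1) ((i + 1) / N))))
      + 1 / N / 2 * (correctedNodalError u Pu N i + correctedNodalError u Pu N (i + 1)) := by
    simp only [correctedNodalError]
    push_cast
    ring
  rw [key]
  refine (abs_add_le _ _).trans (add_le_add hT ?_)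
  rw [abs_mul, abs_of_pos (by positivity)]
  gcongr
  exact abs_add_le _ _

end NodalError

/-- **Superaccuracy of cell averages of the L² projection error onto `S_{h,0}`.** -/
theorem stmt_4 :
    ∃ C : ℝ → ℝ,
      ∀ (u Pu : ℝ → ℝ) (N : ℕ), 2 ≤ N →
        ContDiffOn ℝ 4 u (Icc (0:ℝ) 1) → u 0 = 0 → u 1 = 0 →
        iteratedDerivWithin 2 u (Icc (0:ℝ) 1) 0 = 0 →
        iteratedDerivWithin 2 u (Icc (0:ℝ) 1) 1 = 0 →
        IsL2ProjOn (PL0 N) u Pu →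
        ∀ i < N,
          |∫ y in ((i : ℝ)/N)..(((i : ℝ)+1)/N), (u y - Pu y)|
            ≤ C (sSup ((fun y => |iteratedDerivWithin 4 u (Icc (0:ℝ) 1) y|) '' Icc (0:ℝ) 1))
                * ((1:ℝ)/N) ^ 5 := by
  refine ⟨fun M => 11 * M, fun u Pu N hN hu hu0 hu1 hu20 hu21 hP i hi => ?_⟩
  set M := sSup ((fun y => |iteratedDerivWithin 4 u (Icc (0:ℝ) 1) y|) '' Icc (0:ℝ) 1)
  have hM : ∀ y ∈ Icc (0 : ℝ) 1, |iteratedDerivWithin 4 u (Icc 0 1) y| ≤ M := fun y hy =>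
    (hu.continuousOn_iteratedDerivWithin le_rfl (uniqueDiffOn_Icc zero_lt_one)).abs
      |>.le_sSup_image_Icc hy
  have hM0 : 0 ≤ M := (abs_nonneg _).trans (hM 0 (left_mem_Icc.2 zero_le_one))
  have hN0 : (N : ℝ) ≠ 0 := by exact_mod_cast (by omega : N ≠ 0)
  have hnodal : ∀ k ≤ N, |correctedNodalError u Pu N k| ≤ 9 * M * (1 / N) ^ 4 := by
    intro k hk
    have := abs_le_half_of_abs_add_four_mul_add_le (ε := correctedNodalError u Pu N)
      (by positivity) (by simp [correctedNodalError, hu0, hu20, hP.1.2.1])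
      (by simp [correctedNodalError, div_self hN0, hu1, hu21, hP.1.2.2])
      (fun j hj => abs_correctedNodalError_add_le hu hM hP hj) hk
    linarith
  calc _ ≤ 2 * M * (1 / N) ^ 5 + 1 / N / 2 * (|correctedNodalError u Pu N i|
        + |correctedNodalError u Pu N (i + 1)|) :=
        abs_integral_sub_le_correctedNodalError hu hM hP hi
    _ ≤ 2 * M * (1 / N) ^ 5 + 1 / N / 2 * (9 * M * (1 / N) ^ 4 + 9 * M * (1 / N) ^ 4) := by
        gcongr <;> exact hnodal _ (by omega)
    _ = 11 * M * (1 / N) ^ 5 := by ring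
end
end

section
/- Let u ∈ C₀³ with u''(0) = u''(1) = 0, and let σ = u − P₀u. Then there exists a constant C, depending only on ‖u⁽³⁾‖_{L^∞(0,1)} and not on N, such that for all N ≥ 2, max_{1≤i≤N} |σ'(x_{i+1/2})| ≤ C h², where x_{i+1/2} = (x_i + x_{i+1})/2 is the midpoint of I_i and σ' denotes the derivative of σ (which exists at each midpoint since P₀u is affine on the interior of each I_i). -/
/-!
Testing the orthogonality of `u - P₀u` to `S_{h,0}` against the hat function of an interior
node `x_j`, and expanding `u` to second order about `x_j`, shows that the corrected nodal errors
`w_j = (P₀u - u)(x_j) + h² u''(x_j) / 12` satisfy `w_{j-1} + 4 w_j + w_{j+1} = O(h³)`. The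
boundary conditions on `u` and `u''` give `w_0 = w_N = 0`, so the diagonal dominance of this
stencil yields `max |w_j| = O(h³)`. At the midpoint of `I_i`, `σ'` is `u'` minus the difference
quotient of `P₀u`; that quotient is the difference quotient of `u` up to `(w_{i+1} - w_i) / h`
and `h (u''(x_{i+1}) - u''(x_i)) / 12`, and the difference quotient of `u` matches `u'` at the
midpoint to `O(h²)`.
-/

noncomputable section
open Set

open intervalIntegral
open MeasureTheory (volume ae_of_all)

theorem abs_le_of_hasDerivAt_of_abs_le_mul_pow {F f : ℝ → ℝ} {a b c K : ℝ} {k : ℕ}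
    (hF : ContinuousOn F (Icc a b)) (hFf : ∀ y ∈ Ioo a b, HasDerivAt F (f y) y)
    (hf : ContinuousOn f (Icc a b)) (hc : c ∈ Icc a b) (hFc : F c = 0)
    (hK : ∀ t ∈ Icc a b, |f t| ≤ K * |t - c| ^ k) {y : ℝ} (hy : y ∈ Icc a b) :
    |F y| ≤ K * |y - c| ^ (k + 1) / (k + 1) := by
  have ftc : ∀ {p q}, p ∈ Icc a b → q ∈ Icc a b → p ≤ q → ∫ t in p..q, f t = F q - F p :=
    fun hp hq hpq => integral_eq_sub_of_hasDerivAt_of_le hpq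
      (hF.mono (Icc_subset_Icc hp.1 hq.2))
      (fun t ht => hFf t ⟨hp.1.trans_lt ht.1, ht.2.trans_le hq.2⟩)
      ((hf.mono (Icc_subset_Icc hp.1 hq.2)).intervalIntegrable_of_Icc hpq)
  have bound : ∀ {p q}, p ≤ q → ∀ g : ℝ → ℝ, Continuous g →
      (∀ t ∈ Icc p q, |f t| ≤ g t) → |∫ t in p..q, f t| ≤ ∫ t in p..q, g t :=
    fun hpq g hg hfg => by
      simpa only [Real.norm_eq_abs] using intervalIntegral.norm_integral_le_of_norm_le (f := f) hpq
        (ae_of_all _ fun t ht => hfg t (Ioc_subset_Icc_self ht))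
        (hg.intervalIntegrable _ _)
  rcases le_total c y with hcy | hyc
  · have hint : ∫ t in c..y, K * (t - c) ^ k = K * (y - c) ^ (k + 1) / (k + 1) := by
      rw [integral_comp_sub_right (fun t => K * t ^ k), integral_const_mul, integral_pow, sub_self,
        zero_pow k.succ_ne_zero, sub_zero]
      ring
    rw [abs_of_nonneg (sub_nonneg.2 hcy), ← hint, ← sub_zero (F y), ← hFc, ← ftc hc hy hcy]
    refine bound hcy _ (by fun_prop) fun t ht => ?_
    simpa [abs_of_nonneg (sub_nonneg.2 ht.1)] using
      hK t ⟨hc.1.trans ht.1, ht.2.trans hy.2⟩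
  · have hint : ∫ t in y..c, K * (c - t) ^ k = K * (c - y) ^ (k + 1) / (k + 1) := by
      rw [integral_comp_sub_left (fun t => K * t ^ k), integral_const_mul, integral_pow, sub_self,
        zero_pow k.succ_ne_zero, sub_zero]
      ring
    rw [abs_sub_comm, abs_of_nonneg (sub_nonneg.2 hyc), ← hint, ← abs_neg, ← zero_sub, ← hFc,
      ← ftc hy hc hyc]
    refine bound hyc _ (by fun_prop) fun t ht => ?_
    simpa [abs_sub_comm t, abs_of_nonneg (sub_nonneg.2 ht.2)] using
      hK t ⟨hy.1.trans ht.1, ht.2.trans hc.2⟩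

section Taylor

variable {u : ℝ → ℝ} {a b M : ℝ}

theorem hasDerivAt_iteratedDerivWithin_Icc {n : WithTop ℕ∞} (hab : a < b)
    (hu : ContDiffOn ℝ n u (Icc a b)) {k : ℕ} (hk : k < n) {y : ℝ} (hy : y ∈ Ioo a b) :
    HasDerivAt (iteratedDerivWithin k u (Icc a b))
      (iteratedDerivWithin (k + 1) u (Icc a b) y) y := by
  rw [iteratedDerivWithin_succ]
  exact ((hu.differentiableOn_iteratedDerivWithin hk (uniqueDiffOn_Icc hab)) y
    (Ioo_subset_Icc_self hy)).hasDerivWithinAt.hasDerivAt (Icc_mem_nhds hy.1 hy.2)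

theorem continuousOn_iteratedDerivWithin_Icc {n : WithTop ℕ∞} (hab : a < b)
    (hu : ContDiffOn ℝ n u (Icc a b)) {k : ℕ} (hk : k ≤ n) :
    ContinuousOn (iteratedDerivWithin k u (Icc a b)) (Icc a b) :=
  hu.continuousOn_iteratedDerivWithin hk (uniqueDiffOn_Icc hab)

variable (hab : a < b) (hu : ContDiffOn ℝ 3 u (Icc a b))
  (hM : ∀ y ∈ Icc a b, |iteratedDerivWithin 3 u (Icc a b) y| ≤ M)
  {c : ℝ} (hc : c ∈ Icc a b)
include hab hu hM hc

theorem abs_iteratedDerivWithin_two_sub_le {y : ℝ} (hy : y ∈ Icc a b) :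
    |iteratedDerivWithin 2 u (Icc a b) y - iteratedDerivWithin 2 u (Icc a b) c|
      ≤ M * |y - c| := by
  have h2 := continuousOn_iteratedDerivWithin_Icc hab hu (k := 2) (by norm_num)
  simpa using abs_le_of_hasDerivAt_of_abs_le_mul_pow (k := 0) (by fun_prop)
    (fun t ht => (hasDerivAt_iteratedDerivWithin_Icc hab hu (k := 2) (by norm_num) ht).sub_const _)
    (continuousOn_iteratedDerivWithin_Icc hab hu le_rfl) hc (sub_self _) (by simpa using hM) hy

theorem abs_iteratedDerivWithin_one_sub_taylor_le {y : ℝ} (hy : y ∈ Icc a b) :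
    |iteratedDerivWithin 1 u (Icc a b) y - iteratedDerivWithin 1 u (Icc a b) c
        - iteratedDerivWithin 2 u (Icc a b) c * (y - c)| ≤ M * |y - c| ^ 2 / 2 := by
  have h1 := continuousOn_iteratedDerivWithin_Icc hab hu (k := 1) (by norm_num)
  have h2 := continuousOn_iteratedDerivWithin_Icc hab hu (k := 2) (by norm_num)
  have hderiv : ∀ t ∈ Ioo a b, HasDerivAt (fun y => iteratedDerivWithin 1 u (Icc a b) y
      - iteratedDerivWithin 1 u (Icc a b) c - iteratedDerivWithin 2 u (Icc a b) c * (y - c))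
      (iteratedDerivWithin 2 u (Icc a b) t - iteratedDerivWithin 2 u (Icc a b) c) t :=
    fun t ht => (((hasDerivAt_iteratedDerivWithin_Icc hab hu (k := 1) (by norm_num) ht).sub_const
        (iteratedDerivWithin 1 u (Icc a b) c)).sub
        (((hasDerivAt_id t).sub_const c).const_mul
          (iteratedDerivWithin 2 u (Icc a b) c))).congr_deriv (by ring)
  refine (abs_le_of_hasDerivAt_of_abs_le_mul_pow (k := 1) (K := M) (by fun_prop) hderiv
    (by fun_prop) hc (by simp) (fun t ht => ?_) hy).trans_eq (by norm_num)
  simpa using abs_iteratedDerivWithin_two_sub_le hab hu hM hc ht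

theorem abs_sub_taylor_le {y : ℝ} (hy : y ∈ Icc a b) :
    |u y - u c - iteratedDerivWithin 1 u (Icc a b) c * (y - c)
        - iteratedDerivWithin 2 u (Icc a b) c * (y - c) ^ 2 / 2| ≤ M * |y - c| ^ 3 / 6 := by
  have h0 := hu.continuousOn
  have h1 := continuousOn_iteratedDerivWithin_Icc hab hu (k := 1) (by norm_num)
  have hderiv : ∀ t ∈ Ioo a b, HasDerivAt (fun y => u y - u c
      - iteratedDerivWithin 1 u (Icc a b) c * (y - c)
      - iteratedDerivWithin 2 u (Icc a b) c * (y - c) ^ 2 / 2)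
      (iteratedDerivWithin 1 u (Icc a b) t - iteratedDerivWithin 1 u (Icc a b) c
        - iteratedDerivWithin 2 u (Icc a b) c * (t - c)) t :=
    fun t ht => by
      have := (((hasDerivAt_iteratedDerivWithin_Icc hab hu (k := 0) (by norm_num) ht).sub_const
        (u c)).sub (((hasDerivAt_id t).sub_const c).const_mul
          (iteratedDerivWithin 1 u (Icc a b) c))).sub
        (((((hasDerivAt_id t).sub_const c).pow 2).const_mul
          (iteratedDerivWithin 2 u (Icc a b) c)).div_const 2)
      simp only [iteratedDerivWithin_zero, zero_add] at this
      exact this.congr_deriv (by simp only [id]; ring)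
  refine (abs_le_of_hasDerivAt_of_abs_le_mul_pow (k := 2) (K := M / 2) (by fun_prop) hderiv
    (by fun_prop) hc (by simp) (fun t ht => ?_) hy).trans_eq (by push_cast; ring)
  linarith [abs_iteratedDerivWithin_one_sub_taylor_le hab hu hM hc ht]

end Taylor

theorem integral_cubic_s5 (a b p₀ p₁ p₂ p₃ : ℝ) :
    ∫ t in a..b, (p₀ + p₁ * t + p₂ * t ^ 2 + p₃ * t ^ 3)
      = (p₀ * b + p₁ * b ^ 2 / 2 + p₂ * b ^ 3 / 3 + p₃ * b ^ 4 / 4)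
        - (p₀ * a + p₁ * a ^ 2 / 2 + p₂ * a ^ 3 / 3 + p₃ * a ^ 4 / 4) := by
  have hi : ∀ {g : ℝ → ℝ}, Continuous g → IntervalIntegrable g volume a b :=
    fun hg => hg.intervalIntegrable _ _
  rw [integral_add (hi (by fun_prop)) (hi (by fun_prop)),
    integral_add (hi (by fun_prop)) (hi (by fun_prop)),
    integral_add (hi (by fun_prop)) (hi (by fun_prop))]
  simp only [integral_const, integral_const_mul, integral_const_mul p₁ (fun t => t), integral_pow,
    integral_id, smul_eq_mul]
  ring

section Tent

def tent (c h y : ℝ) : ℝ := max 0 (1 - |y - c| / h)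

variable {c h y : ℝ}

theorem continuous_tent (c h : ℝ) : Continuous (tent c h) := by
  unfold tent; fun_prop

theorem tent_eq_zero (hh : 0 < h) (hy : h ≤ |y - c|) : tent c h y = 0 :=
  max_eq_left (by rw [sub_nonpos, one_le_div hh]; exact hy)

theorem tent_eq_left (hh : 0 < h) (hy : y ∈ Icc (c - h) c) : tent c h y = 1 + (y - c) / h := by
  rw [tent, abs_of_nonpos (by linarith [hy.2]), max_eq_right]
  · ring
  · rw [sub_nonneg, div_le_one hh]; linarith [hy.1]

theorem tent_eq_right (hh : 0 < h) (hy : y ∈ Icc c (c + h)) : tent c h y = 1 - (y - c) / h := by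
  rw [tent, abs_of_nonneg (by linarith [hy.1]), max_eq_right]
  rw [sub_nonneg, div_le_one hh]; linarith [hy.2]

theorem tent_mem_PL0 {N j : ℕ} (hj : 1 ≤ j) (hjN : j < N) :
    tent ((j : ℝ) / N) (1 / N) ∈ PL0 N := by
  have hN : (0 : ℝ) < N := by exact_mod_cast (show 0 < N by omega)
  have hh : (0 : ℝ) < 1 / N := by positivity
  have hj' : (1 : ℝ) ≤ j := by exact_mod_cast hj
  have hjN' : (j : ℝ) + 1 ≤ N := by exact_mod_cast hjN
  refine ⟨⟨(continuous_tent _ _).continuousOn, fun i hi => ?_⟩, ?_, ?_⟩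
  · rcases lt_trichotomy (i + 1) j with hij | hij | hij
    · have hij' : (i : ℝ) + 2 ≤ j := by exact_mod_cast hij
      refine ⟨0, 0, fun y hy => tent_eq_zero hh ?_ |>.trans (by ring)⟩
      rw [abs_sub_comm]
      refine le_trans ?_ (le_abs_self _)
      have : ((i : ℝ) + 1) / N ≤ (j - 1) / N := by gcongr; linarith
      linarith [hy.2, show ((j : ℝ) - 1) / N = j / N - 1 / N by ring]
    · have hij' : (i : ℝ) + 1 = j := by exact_mod_cast hij
      refine ⟨N, 1 - j, fun y hy => ?_⟩
      rw [tent_eq_left hh (by rw [← hij']; convert hy using 2; ring)]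
      field_simp
      ring
    · rcases (Nat.lt_succ_iff.1 hij).eq_or_lt with hij | hij
      · subst hij
        refine ⟨-N, 1 + j, fun y hy => ?_⟩
        rw [tent_eq_right hh (by convert hy using 2; ring)]
        field_simp
        ring
      · have hij' : (j : ℝ) + 1 ≤ i := by exact_mod_cast hij
        refine ⟨0, 0, fun y hy => tent_eq_zero hh ?_ |>.trans (by ring)⟩
        refine le_trans ?_ (le_abs_self _)
        have : ((j : ℝ) + 1) / N ≤ i / N := by gcongr
        linarith [hy.1, show ((j : ℝ) + 1) / N = j / N + 1 / N by ring]
  · refine tent_eq_zero hh ?_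
    rw [zero_sub, abs_neg, abs_of_nonneg (by positivity)]
    gcongr
  · refine tent_eq_zero hh ?_
    rw [abs_of_nonneg (by rw [sub_nonneg, div_le_one hN]; linarith)]
    rw [show (1 : ℝ) - j / N = (N - j) / N by field_simp]
    gcongr
    linarith

theorem abs_tent_le_one (hh : 0 < h) : |tent c h y| ≤ 1 := by
  rw [abs_of_nonneg (le_max_left _ _)]
  exact max_le zero_le_one (by linarith [div_nonneg (abs_nonneg (y - c)) hh.le])

theorem integral_mul_tent {f : ℝ → ℝ} {a b : ℝ} (hh : 0 < h) (ha : a ≤ c - h) (hb : c + h ≤ b)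
    (hf : IntervalIntegrable f volume a b) :
    ∫ y in a..b, f y * tent c h y
      = (∫ y in (c - h)..c, f y * (1 + (y - c) / h))
        + ∫ y in c..(c + h), f y * (1 - (y - c) / h) := by
  have hab : a ≤ b := by linarith
  have hg := hf.mul_continuousOn (continuous_tent c h).continuousOn
  have hsub : ∀ {p q}, p ∈ Icc a b → q ∈ Icc a b →
      IntervalIntegrable (fun y => f y * tent c h y) volume p q := fun hp hq =>
    hg.mono_set (uIcc_subset_uIcc (by rwa [uIcc_of_le hab]) (by rwa [uIcc_of_le hab]))
  have ma : a ∈ Icc a b := ⟨le_rfl, hab⟩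
  have m₁ : c - h ∈ Icc a b := ⟨ha, by linarith⟩
  have m₂ : c ∈ Icc a b := ⟨by linarith, by linarith⟩
  have m₃ : c + h ∈ Icc a b := ⟨by linarith, hb⟩
  have mb : b ∈ Icc a b := ⟨hab, le_rfl⟩
  have zero_left : ∫ y in a..(c - h), f y * tent c h y = 0 := by
    refine (integral_congr fun y hy => ?_).trans integral_zero
    rw [uIcc_of_le ha] at hy
    rw [tent_eq_zero hh (show h ≤ |y - c| by rw [abs_sub_comm, abs_of_nonneg] <;> linarith [hy.2]),
      mul_zero]
  have zero_right : ∫ y in (c + h)..b, f y * tent c h y = 0 := by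
    refine (integral_congr fun y hy => ?_).trans integral_zero
    rw [uIcc_of_le hb] at hy
    rw [tent_eq_zero hh (show h ≤ |y - c| by rw [abs_of_nonneg] <;> linarith [hy.1]), mul_zero]
  have left : ∫ y in (c - h)..c, f y * tent c h y = ∫ y in (c - h)..c, f y * (1 + (y - c) / h) :=
    integral_congr fun y hy => by
      rw [uIcc_of_le (by linarith)] at hy
      simp only [tent_eq_left hh hy]
  have right : ∫ y in c..(c + h), f y * tent c h y = ∫ y in c..(c + h), f y * (1 - (y - c) / h) :=
    integral_congr fun y hy => by
      rw [uIcc_of_le (by linarith)] at hy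
      simp only [tent_eq_right hh hy]
  rw [← integral_add_adjacent_intervals (hsub ma m₁) (hsub m₁ mb),
    ← integral_add_adjacent_intervals (hsub m₁ m₂) (hsub m₂ mb),
    ← integral_add_adjacent_intervals (hsub m₂ m₃) (hsub m₃ mb), zero_left, zero_right, left, right]
  ring

theorem integral_quadratic_mul_tent_left (hh : h ≠ 0) (α β γ : ℝ) :
    ∫ y in (c - h)..c, (α + β * (y - c) + γ * (y - c) ^ 2) * (1 + (y - c) / h)
      = α * h / 2 - β * h ^ 2 / 6 + γ * h ^ 3 / 12 := by
  rw [integral_comp_sub_right (fun t => (α + β * t + γ * t ^ 2) * (1 + t / h)) c]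
  simp only [sub_sub_cancel_left, sub_self]
  have e : ∀ t, (α + β * t + γ * t ^ 2) * (1 + t / h)
      = α + (α / h + β) * t + (β / h + γ) * t ^ 2 + γ / h * t ^ 3 := fun t => by ring
  simp only [e, integral_cubic_s5]
  field_simp
  ring

theorem integral_quadratic_mul_tent_right (hh : h ≠ 0) (α β γ : ℝ) :
    ∫ y in c..(c + h), (α + β * (y - c) + γ * (y - c) ^ 2) * (1 - (y - c) / h)
      = α * h / 2 + β * h ^ 2 / 6 + γ * h ^ 3 / 12 := by
  rw [integral_comp_sub_right (fun t => (α + β * t + γ * t ^ 2) * (1 - t / h)) c]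
  simp only [add_sub_cancel_left, sub_self]
  have e : ∀ t, (α + β * t + γ * t ^ 2) * (1 - t / h)
      = α + (β - α / h) * t + (γ - β / h) * t ^ 2 + -(γ / h) * t ^ 3 := fun t => by ring
  simp only [e, integral_cubic_s5]
  field_simp
  ring

theorem integral_mul_tent_of_affine {p : ℝ → ℝ} {a b : ℝ} (hh : 0 < h) (ha : a ≤ c - h)
    (hb : c + h ≤ b) (hp : IntervalIntegrable p volume a b)
    (hl : ∃ a₁ b₁ : ℝ, ∀ y ∈ Icc (c - h) c, p y = a₁ * y + b₁)
    (hr : ∃ a₂ b₂ : ℝ, ∀ y ∈ Icc c (c + h), p y = a₂ * y + b₂) :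
    ∫ y in a..b, p y * tent c h y = h / 6 * (p (c - h) + 4 * p c + p (c + h)) := by
  obtain ⟨a₁, b₁, hl⟩ := hl
  obtain ⟨a₂, b₂, hr⟩ := hr
  have left : ∫ y in (c - h)..c, p y * (1 + (y - c) / h)
      = ∫ y in (c - h)..c, ((a₁ * c + b₁) + a₁ * (y - c) + 0 * (y - c) ^ 2) * (1 + (y - c) / h) :=
    integral_congr fun y hy => by
      rw [uIcc_of_le (by linarith)] at hy
      simp only [hl y hy]; ring
  have right : ∫ y in c..(c + h), p y * (1 - (y - c) / h)
      = ∫ y in c..(c + h), ((a₂ * c + b₂) + a₂ * (y - c) + 0 * (y - c) ^ 2) * (1 - (y - c) / h) :=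
    integral_congr fun y hy => by
      rw [uIcc_of_le (by linarith)] at hy
      simp only [hr y hy]; ring
  rw [integral_mul_tent hh ha hb hp, left, right, integral_quadratic_mul_tent_left hh.ne',
    integral_quadratic_mul_tent_right hh.ne', hl (c - h) ⟨le_rfl, by linarith⟩,
    hr (c + h) ⟨by linarith, le_rfl⟩]
  linear_combination (-(h / 3)) * hl c ⟨by linarith, le_rfl⟩ - (h / 3) * hr c ⟨le_rfl, by linarith⟩

theorem abs_integral_mul_tent_sub_le {f : ℝ → ℝ} {a b α β γ K : ℝ} (hh : 0 < h)
    (ha : a ≤ c - h) (hb : c + h ≤ b) (hf : IntervalIntegrable f volume a b)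
    (hK : ∀ y ∈ Icc (c - h) (c + h), |f y - (α + β * (y - c) + γ * (y - c) ^ 2)| ≤ K) :
    |(∫ y in a..b, f y * tent c h y) - (h * α + γ * h ^ 3 / 6)| ≤ 2 * h * K := by
  set q := fun y => α + β * (y - c) + γ * (y - c) ^ 2
  have hq : IntervalIntegrable q volume a b := Continuous.intervalIntegrable (by fun_prop) _ _
  have hfq : IntervalIntegrable (fun y => f y - q y) volume (c - h) (c + h) :=
    (hf.sub hq).mono_set (uIcc_subset_uIcc
      (by rw [uIcc_of_le (by linarith)]; constructor <;> linarith)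
      (by rw [uIcc_of_le (by linarith)]; constructor <;> linarith))
  have hqint : ∫ y in a..b, q y * tent c h y = h * α + γ * h ^ 3 / 6 := by
    rw [integral_mul_tent hh ha hb hq, integral_quadratic_mul_tent_left hh.ne',
      integral_quadratic_mul_tent_right hh.ne']
    ring
  have hloc : (∫ y in a..b, f y * tent c h y) - (h * α + γ * h ^ 3 / 6)
      = ∫ y in (c - h)..(c + h), (f y - q y) * tent c h y := by
    have htent := (continuous_tent c h).continuousOn (s := uIcc a b)
    have hft : IntervalIntegrable (fun y => f y * tent c h y) volume a b :=
      hf.mul_continuousOn htent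
    have hqt : IntervalIntegrable (fun y => q y * tent c h y) volume a b :=
      hq.mul_continuousOn htent
    rw [← hqint, ← integral_sub hft hqt]
    simp only [← sub_mul]
    rw [integral_mul_tent hh ha hb (hf.sub hq), integral_mul_tent hh le_rfl le_rfl hfq]
  rw [hloc, ← Real.norm_eq_abs]
  refine (norm_integral_le_of_norm_le_const (C := K) fun y hy => ?_).trans_eq ?_
  · have hy' : y ∈ Icc (c - h) (c + h) := by
      rw [uIoc_of_le (by linarith)] at hy; exact Ioc_subset_Icc_self hy
    rw [Real.norm_eq_abs, abs_mul]
    exact (mul_le_mul (hK y hy') (abs_tent_le_one hh) (abs_nonneg _)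
      ((abs_nonneg _).trans (hK y hy'))).trans_eq (mul_one K)
  · rw [abs_of_nonneg (by linarith)]; ring

end Tent

theorem abs_le_of_abs_add_mul_add_le {w : ℕ → ℝ} {N : ℕ} {d ε : ℝ} (hd : 2 < d) (hε : 0 ≤ ε)
    (h0 : w 0 = 0) (hN : w N = 0)
    (hrel : ∀ k, k + 2 ≤ N → |w k + d * w (k + 1) + w (k + 2)| ≤ ε) {j : ℕ} (hj : j ≤ N) :
    |w j| ≤ ε / (d - 2) := by
  obtain ⟨J, hJ, hmax⟩ := (Finset.range (N + 1)).exists_max_image (fun j => |w j|) ⟨0, by simp⟩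
  have hJN : J ≤ N := Nat.lt_succ_iff.1 (Finset.mem_range.1 hJ)
  replace hmax : ∀ j ≤ N, |w j| ≤ |w J| := fun j hj => hmax j (Finset.mem_range.2 (by omega))
  refine (hmax j hj).trans ?_
  have hd' : 0 < d - 2 := by linarith
  rcases J with _ | k
  · rw [h0, abs_zero]; positivity
  rcases hJN.eq_or_lt with hkN | hkN
  · rw [hkN, hN, abs_zero]; positivity
  rw [le_div_iff₀ hd']
  have hk := hmax k (by omega)
  have hk₂ := hmax (k + 2) (by omega)
  have hdw : |d * w (k + 1)| ≤ ε + |w k| + |w (k + 2)| := by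
    have e : d * w (k + 1) = (w k + d * w (k + 1) + w (k + 2)) - w k - w (k + 2) := by ring
    rw [e]
    linarith [abs_sub (w k + d * w (k + 1) + w (k + 2) - w k) (w (k + 2)),
      abs_sub (w k + d * w (k + 1) + w (k + 2)) (w k), hrel k (by omega)]
  rw [abs_mul, abs_of_pos (by linarith)] at hdw
  linarith

theorem abs_integral_mul_tent_sub_taylor_le {u : ℝ → ℝ} {a b c h M : ℝ} (hab : a < b)
    (hu : ContDiffOn ℝ 3 u (Icc a b))
    (hM : ∀ y ∈ Icc a b, |iteratedDerivWithin 3 u (Icc a b) y| ≤ M)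
    (hh : 0 < h) (ha : a ≤ c - h) (hb : c + h ≤ b) :
    |(∫ y in a..b, u y * tent c h y)
        - (h * u c + iteratedDerivWithin 2 u (Icc a b) c * h ^ 3 / 12)| ≤ M * h ^ 4 / 3 := by
  have hM₀ : 0 ≤ M := (abs_nonneg _).trans (hM a ⟨le_rfl, hab.le⟩)
  have := abs_integral_mul_tent_sub_le hh ha hb (hu.continuousOn.intervalIntegrable_of_Icc hab.le)
    (α := u c) (β := iteratedDerivWithin 1 u (Icc a b) c)
    (γ := iteratedDerivWithin 2 u (Icc a b) c / 2) (K := M * h ^ 3 / 6) fun y hy => by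
      have hyc : |y - c| ≤ h := abs_sub_le_iff.2 ⟨by linarith [hy.2], by linarith [hy.1]⟩
      calc _ = |u y - u c - iteratedDerivWithin 1 u (Icc a b) c * (y - c)
              - iteratedDerivWithin 2 u (Icc a b) c * (y - c) ^ 2 / 2| := by ring_nf
        _ ≤ M * |y - c| ^ 3 / 6 :=
          abs_sub_taylor_le hab hu hM ⟨by linarith, by linarith⟩
            ⟨by linarith [hy.1], by linarith [hy.2]⟩
        _ ≤ M * h ^ 3 / 6 := by gcongr
  convert this using 2 <;> ring

theorem hasDerivAt_of_mem_PL {φ : ℝ → ℝ} {N i : ℕ} (hφ : φ ∈ PL N) (hi : i < N) {y : ℝ}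
    (hy : y ∈ Ioo ((i : ℝ) / N) (((i : ℝ) + 1) / N)) :
    HasDerivAt φ (N * (φ (((i : ℝ) + 1) / N) - φ (i / N))) y := by
  obtain ⟨a, b, hab⟩ := hφ.2 i hi
  have hN : (N : ℝ) ≠ 0 := Nat.cast_ne_zero.2 (by omega)
  have hlt : (i : ℝ) / N ≤ ((i : ℝ) + 1) / N := by gcongr; linarith
  rw [hab _ ⟨le_rfl, hlt⟩, hab _ ⟨hlt, le_rfl⟩,
    show (N : ℝ) * (a * ((i + 1) / N) + b - (a * (i / N) + b)) = a by field_simp; ring]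
  refine (((hasDerivAt_id y).const_mul a).add_const b).congr_deriv (mul_one a)
    |>.congr_of_eventuallyEq ?_
  filter_upwards [Icc_mem_nhds hy.1 hy.2] with z hz
  exact hab z hz

theorem integral_mul_tent_of_isL2ProjOn {u Pu : ℝ → ℝ} {N k : ℕ} (hk : k + 2 ≤ N)
    (hu : IntervalIntegrable u volume 0 1) (hP : IsL2ProjOn (PL0 N) u Pu) :
    ∫ y in (0 : ℝ)..1, u y * tent (((k : ℝ) + 1) / N) (1 / N) y
      = 1 / N / 6 * (Pu (k / N) + 4 * Pu (((k : ℝ) + 1) / N) + Pu (((k : ℝ) + 2) / N)) := by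
  have hN : (0 : ℝ) < N := by exact_mod_cast (show 0 < N by omega)
  have hkN : (k : ℝ) + 2 ≤ N := by exact_mod_cast hk
  have hmem := tent_mem_PL0 (N := N) (j := k + 1) (by omega) (by omega)
  push_cast at hmem
  have hPu : IntervalIntegrable Pu volume 0 1 := hP.1.1.1.intervalIntegrable_of_Icc zero_le_one
  have htent := (continuous_tent (((k : ℝ) + 1) / N) (1 / N)).continuousOn (s := uIcc 0 1)
  have horth : ∫ y in (0 : ℝ)..1, u y * tent (((k : ℝ) + 1) / N) (1 / N) y
      = ∫ y in (0 : ℝ)..1, Pu y * tent (((k : ℝ) + 1) / N) (1 / N) y := by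
    rw [← sub_eq_zero, ← integral_sub (hu.mul_continuousOn htent) (hPu.mul_continuousOn htent)]
    simpa only [ip, sub_mul] using hP.2 _ hmem
  obtain ⟨a₁, b₁, hl⟩ := hP.1.1.2 k (by omega)
  obtain ⟨a₂, b₂, hr⟩ := hP.1.1.2 (k + 1) (by omega)
  have hleft : ((k : ℝ) + 1) / N - 1 / N = k / N := by ring
  have hright : ((k : ℝ) + 1) / N + 1 / N = ((k : ℝ) + 2) / N := by ring
  rw [horth, integral_mul_tent_of_affine (by positivity) (by rw [hleft]; positivity)
    (by rw [hright, div_le_one hN]; exact hkN) hPu ⟨a₁, b₁, by rwa [hleft]⟩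
    ⟨a₂, b₂, fun y hy => hr y (by push_cast; rwa [add_assoc, one_add_one_eq_two, ← hright])⟩,
    hleft, hright]

/-- With `h = 1 / N`, the correction `h² u'' / 12` absorbs the `O(h²)` consistency error of the
three-point relation obtained by testing against hat functions. -/
def nodalDefect (u Pu : ℝ → ℝ) (N j : ℕ) : ℝ :=
  Pu (j / N) - u (j / N) + (1 / N) ^ 2 / 12 * iteratedDerivWithin 2 u (Icc 0 1) (j / N)

theorem abs_nodalDefect_three_point_le {u Pu : ℝ → ℝ} {M : ℝ} {N k : ℕ} (hk : k + 2 ≤ N)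
    (hu : ContDiffOn ℝ 3 u (Icc 0 1))
    (hM : ∀ y ∈ Icc (0 : ℝ) 1, |iteratedDerivWithin 3 u (Icc 0 1) y| ≤ M)
    (hP : IsL2ProjOn (PL0 N) u Pu) :
    |nodalDefect u Pu N k + 4 * nodalDefect u Pu N (k + 1) + nodalDefect u Pu N (k + 2)|
      ≤ 5 / 2 * M * (1 / N) ^ 3 := by
  have hN : (0 : ℝ) < N := by exact_mod_cast (show 0 < N by omega)
  have hkN : (k : ℝ) + 2 ≤ N := by exact_mod_cast hk
  set h : ℝ := 1 / N with h_def
  set c : ℝ := ((k : ℝ) + 1) / N with c_def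
  have hh : 0 < h := by positivity
  have hl : (k : ℝ) / N = c - h := by ring
  have hr : ((k : ℝ) + 2) / N = c + h := by ring
  have hl₀ : 0 ≤ c - h := by rw [← hl]; positivity
  have hr₁ : c + h ≤ 1 := by rw [← hr, div_le_one hN]; exact hkN
  have ml : c - h ∈ Icc (0 : ℝ) 1 := ⟨hl₀, by linarith⟩
  have mc : c ∈ Icc (0 : ℝ) 1 := ⟨by linarith, by linarith⟩
  have mr : c + h ∈ Icc (0 : ℝ) 1 := ⟨by linarith, hr₁⟩
  set D₂ := iteratedDerivWithin 2 u (Icc (0 : ℝ) 1)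
  -- the orthogonality relation, with `u` replaced by its Taylor polynomial at `c`
  have hX : |Pu (c - h) + 4 * Pu c + Pu (c + h) - 6 * u c - D₂ c * h ^ 2 / 2|
      ≤ 2 * M * h ^ 3 := by
    have hE := abs_integral_mul_tent_sub_taylor_le zero_lt_one hu hM hh hl₀ hr₁
    rw [integral_mul_tent_of_isL2ProjOn hk (hu.continuousOn.intervalIntegrable_of_Icc zero_le_one)
      hP, hl, hr, ← h_def,
      show h / 6 * (Pu (c - h) + 4 * Pu c + Pu (c + h)) - (h * u c + D₂ c * h ^ 3 / 12)
        = h / 6 * (Pu (c - h) + 4 * Pu c + Pu (c + h) - 6 * u c - D₂ c * h ^ 2 / 2) by ring,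
      abs_mul, abs_of_pos (by positivity)] at hE
    refine le_of_mul_le_mul_left (hE.trans_eq ?_) (by positivity : 0 < h / 6)
    ring
  have hRl := abs_sub_taylor_le zero_lt_one hu hM mc ml
  have hRr := abs_sub_taylor_le zero_lt_one hu hM mc mr
  have hLl := abs_iteratedDerivWithin_two_sub_le zero_lt_one hu hM mc ml
  have hLr := abs_iteratedDerivWithin_two_sub_le zero_lt_one hu hM mc mr
  simp only [sub_sub_cancel_left, add_sub_cancel_left, abs_neg, abs_of_pos hh] at hRl hRr hLl hLr
  have hLl' : |h ^ 2 / 12 * (D₂ (c - h) - D₂ c)| ≤ h ^ 2 / 12 * (M * h) := by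
    rw [abs_mul, abs_of_pos (by positivity)]; gcongr
  have hLr' : |h ^ 2 / 12 * (D₂ (c + h) - D₂ c)| ≤ h ^ 2 / 12 * (M * h) := by
    rw [abs_mul, abs_of_pos (by positivity)]; gcongr
  simp only [nodalDefect]
  push_cast
  rw [← c_def, ← h_def, hl, hr]
  rw [abs_le] at hX hRl hRr hLl' hLr' ⊢
  constructor <;> linarith

section ProjectionError

variable {u Pu : ℝ → ℝ} {M : ℝ} {N : ℕ} (hu : ContDiffOn ℝ 3 u (Icc 0 1))
  (hM : ∀ y ∈ Icc (0 : ℝ) 1, |iteratedDerivWithin 3 u (Icc 0 1) y| ≤ M)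
  (hu0 : u 0 = 0) (hu1 : u 1 = 0)
  (h2u0 : iteratedDerivWithin 2 u (Icc 0 1) 0 = 0) (h2u1 : iteratedDerivWithin 2 u (Icc 0 1) 1 = 0)
  (hP : IsL2ProjOn (PL0 N) u Pu)
include hu hM hu0 hu1 h2u0 h2u1 hP

theorem abs_nodalDefect_le {j : ℕ} (hj : j ≤ N) :
    |nodalDefect u Pu N j| ≤ 5 / 4 * M * (1 / N) ^ 3 := by
  have hM₀ : 0 ≤ M := (abs_nonneg _).trans (hM 0 ⟨le_rfl, zero_le_one⟩)
  have h0 : nodalDefect u Pu N 0 = 0 := by simp [nodalDefect, hP.1.2.1, hu0, h2u0]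
  refine (abs_le_of_abs_add_mul_add_le (d := 4) (by norm_num) (by positivity) h0 ?_
    (fun k hk => abs_nodalDefect_three_point_le hk hu hM hP) hj).trans_eq (by ring)
  obtain rfl | hN := N.eq_zero_or_pos
  · exact h0
  · have h1 : (N : ℝ) / N = 1 := div_self (Nat.cast_ne_zero.2 hN.ne')
    simp [nodalDefect, h1, hP.1.2.2, hu1, h2u1]

theorem abs_deriv_sub_midpoint_le {i : ℕ} (hi : i < N) :
    |deriv (fun y => u y - Pu y) (((i : ℝ) + 1 / 2) / N)| ≤ 3 * M * (1 / N) ^ 2 := by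
  have hN : (0 : ℝ) < N := by exact_mod_cast (show 0 < N by omega)
  have hiN : (i : ℝ) + 1 ≤ N := by exact_mod_cast hi
  set h : ℝ := 1 / N with h_def
  set m : ℝ := ((i : ℝ) + 1 / 2) / N
  have hh : 0 < h := by positivity
  have hl : (i : ℝ) / N = m - h / 2 := by ring
  have hr : ((i : ℝ) + 1) / N = m + h / 2 := by ring
  have hr₁ : m + h / 2 ≤ 1 := by rw [← hr, div_le_one hN]; exact hiN
  have ml : m - h / 2 ∈ Icc (0 : ℝ) 1 := ⟨by rw [← hl]; positivity, by linarith⟩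
  have mr : m + h / 2 ∈ Icc (0 : ℝ) 1 := ⟨by linarith [ml.1], hr₁⟩
  have mm : m ∈ Ioo (0 : ℝ) 1 := ⟨by linarith [ml.1], by linarith [mr.2]⟩
  have hderiv : deriv (fun y => u y - Pu y) m
      = iteratedDerivWithin 1 u (Icc 0 1) m - N * (Pu (m + h / 2) - Pu (m - h / 2)) := by
    have hPu := hasDerivAt_of_mem_PL hP.1.1 hi (y := m) ⟨by linarith, by linarith⟩
    rw [hl, hr] at hPu
    have hu' := hasDerivAt_iteratedDerivWithin_Icc zero_lt_one hu (k := 0) (by norm_num) mm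
    rw [iteratedDerivWithin_zero] at hu'
    exact (hu'.sub hPu).deriv
  have hwl := abs_nodalDefect_le hu hM hu0 hu1 h2u0 h2u1 hP (j := i) hi.le
  have hwr := abs_nodalDefect_le hu hM hu0 hu1 h2u0 h2u1 hP (j := i + 1) hi
  simp only [nodalDefect] at hwl hwr
  push_cast at hwr
  rw [hl, ← h_def] at hwl
  rw [hr, ← h_def] at hwr
  have hRl := abs_sub_taylor_le zero_lt_one hu hM ⟨mm.1.le, mm.2.le⟩ ml
  have hRr := abs_sub_taylor_le zero_lt_one hu hM ⟨mm.1.le, mm.2.le⟩ mr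
  have hL := abs_iteratedDerivWithin_two_sub_le zero_lt_one hu hM ml mr
  simp only [sub_sub_cancel_left, add_sub_cancel_left, abs_neg,
    abs_of_pos (half_pos hh)] at hRl hRr hL
  have hL' : |h ^ 2 / 12 * (iteratedDerivWithin 2 u (Icc 0 1) (m + h / 2)
      - iteratedDerivWithin 2 u (Icc 0 1) (m - h / 2))| ≤ h ^ 2 / 12 * (M * h) := by
    rw [show m + h / 2 - (m - h / 2) = h by ring, abs_of_pos hh] at hL
    rw [abs_mul, abs_of_pos (by positivity : (0 : ℝ) < h ^ 2 / 12)]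
    gcongr
  have hNh : (N : ℝ) * h = 1 := by rw [h_def]; field_simp
  set D₁ := iteratedDerivWithin 1 u (Icc (0 : ℝ) 1)
  set D₂ := iteratedDerivWithin 2 u (Icc (0 : ℝ) 1)
  have key : h * (D₁ m - N * (Pu (m + h / 2) - Pu (m - h / 2)))
      = -((Pu (m + h / 2) - u (m + h / 2) + h ^ 2 / 12 * D₂ (m + h / 2))
          - (Pu (m - h / 2) - u (m - h / 2) + h ^ 2 / 12 * D₂ (m - h / 2)))
        - ((u (m + h / 2) - u m - D₁ m * (h / 2) - D₂ m * (h / 2) ^ 2 / 2)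
          - (u (m - h / 2) - u m - D₁ m * -(h / 2) - D₂ m * (-(h / 2)) ^ 2 / 2))
        + h ^ 2 / 12 * (D₂ (m + h / 2) - D₂ (m - h / 2)) := by
    linear_combination (-(Pu (m + h / 2) - Pu (m - h / 2))) * hNh
  have hbound : |h * (D₁ m - N * (Pu (m + h / 2) - Pu (m - h / 2)))| ≤ h * (3 * M * h ^ 2) := by
    rw [key]
    rw [abs_le] at hwl hwr hRl hRr hL' ⊢
    constructor <;> linarith
  rw [hderiv]
  rw [abs_mul, abs_of_pos hh] at hbound
  exact le_of_mul_le_mul_left hbound hh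

end ProjectionError

/-- **Superaccuracy of the derivative of the L² projection error at midpoints
(`S_{h,0}` case).** -/
theorem stmt_5 :
    ∃ C : ℝ → ℝ,
      ∀ (u Pu : ℝ → ℝ) (N : ℕ), 2 ≤ N →
        ContDiffOn ℝ 3 u (Icc (0:ℝ) 1) → u 0 = 0 → u 1 = 0 →
        iteratedDerivWithin 2 u (Icc (0:ℝ) 1) 0 = 0 →
        iteratedDerivWithin 2 u (Icc (0:ℝ) 1) 1 = 0 →
        IsL2ProjOn (PL0 N) u Pu →
        ∀ i < N,
          |deriv (fun y => u y - Pu y) (((i : ℝ) + 1/2)/N)|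
            ≤ C (sSup ((fun y => |iteratedDerivWithin 3 u (Icc (0:ℝ) 1) y|) '' Icc (0:ℝ) 1))
                * ((1:ℝ)/N) ^ 2 := by
  refine ⟨fun M => 3 * M, fun u Pu N _ hu hu0 hu1 h2u0 h2u1 hP i hi => ?_⟩
  have hbdd : BddAbove ((fun y => |iteratedDerivWithin 3 u (Icc (0 : ℝ) 1) y|) '' Icc 0 1) :=
    isCompact_Icc.bddAbove_image (continuousOn_iteratedDerivWithin_Icc zero_lt_one hu le_rfl).abs
  exact abs_deriv_sub_midpoint_le hu (fun y hy => le_csSup hbdd (mem_image_of_mem _ hy))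
    hu0 hu1 h2u0 h2u1 hP hi
end
end
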